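/- arXiv:1503.02285 — 3 statements merged into one kernel-verified Lean document; each statement's English description precedes it below -/
import Mathlib

section
/- For every n ≥ 0, the immaculate functions {𝔖_α : α a composition of n} form a basis of the degree-n homogeneous component of NSym. In particular, the transition matrix from {𝔖_α} to {H_α} (both indexed by compositions of n) is unitriangular with respect to a suitable order, hence invertible. -/
open scoped BigOperators

noncomputable section

/-- `NSym`: the free associative `ℚ`-algebra on generators `H_1, H_2, …`
(modelled as the free algebra on `ℕ`; only generators with positive index are used). -/
abbrev NSym : Type := FreeAlgebra ℚ ℕ

/-- The complete homogeneous generator `H_n`, with `H_0 = 1` and `H_m = 0` for `m < 0`. -/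
noncomputable def H (n : ℤ) : NSym :=
  if n < 0 then 0 else if n = 0 then 1 else FreeAlgebra.ι ℚ n.toNat

/-- Ordered product `H_{γ_1} H_{γ_2} ⋯ H_{γ_k}` for an integer vector `γ`. -/
noncomputable def Hprod (l : List ℤ) : NSym := (l.map H).prod

/-- A composition: a finite sequence of positive integers. -/
def IsComposition (l : List ℕ) : Prop := ∀ x ∈ l, 0 < x

/-- The immaculate function
`𝔖_α = Σ_{σ ∈ S_k} sgn(σ) H_{α_1+σ(1)-1} ⋯ H_{α_k+σ(k)-k}`. -/
noncomputable def immaculate (α : List ℕ) : NSym :=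
  ∑ σ : Equiv.Perm (Fin α.length),
    ((Equiv.Perm.sign σ : ℤ)) •
      Hprod (List.ofFn fun i => ((α.get i : ℤ) + ((σ i : ℕ) : ℤ) - ((i : ℕ) : ℤ)))

/-- `c` is a (finitely supported) expansion of `f` in the immaculate basis:
the support of `c` consists of compositions and `f = Σ_γ c(γ) 𝔖_γ`. -/
def IsExpansion (f : NSym) (c : List ℕ →₀ ℚ) : Prop :=
  (∀ γ ∈ c.support, IsComposition γ) ∧ f = c.sum fun γ q => q • immaculate γ

/-- `α ⊂_s β` : `|β| = |α| + s`, `α_j ≤ β_j` for all `j`, and `ℓ(β) ≤ ℓ(α) + 1`. -/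
def SubCompS (s : ℕ) (α β : List ℕ) : Prop :=
  β.sum = α.sum + s ∧ (∀ j, α.getD j 0 ≤ β.getD j 0) ∧ β.length ≤ α.length + 1

/-- A skew immaculate tableau of inner shape `α`, recorded by its rows of filled
cells: entries are positive, rows weakly increase, rows strictly below the inner
shape are nonempty, and the first column (heads of the rows below the inner shape)
strictly increases. -/
def IsSkewImmaculate (α : List ℕ) (T : List (List ℕ)) : Prop :=
  α.length ≤ T.length ∧
  (∀ r ∈ T, (∀ x ∈ r, 0 < x) ∧ r.Pairwise (· ≤ ·)) ∧
  (∀ i, α.length ≤ i → i < T.length → T.getD i [] ≠ []) ∧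
  ((T.drop α.length).map (fun r => r.headD 0)).Pairwise (· < ·)

/-- The (full, outer) shape of a skew tableau `T` with inner shape `α`. -/
def shapeOf (α : List ℕ) (T : List (List ℕ)) : List ℕ :=
  List.ofFn fun i : Fin T.length => α.getD i 0 + (T.get i).length

/-- Number of occurrences of the value `v` in the tableau `T`. -/
def countVal (T : List (List ℕ)) (v : ℕ) : ℕ := (T.map fun r => r.count v).sum

/-- `T` has content `β`: the value `v+1` occurs exactly `β_{v+1}` times. -/
def ContentEq (β : List ℕ) (T : List (List ℕ)) : Prop :=
  ∀ v, countVal T (v + 1) = β.getD v 0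

/-- Reading word: each row right to left, from the top row to the bottom row. -/
def readingWord (T : List (List ℕ)) : List ℕ := (T.map List.reverse).flatten

/-- Yamanouchi: each prefix contains at least as many `j`'s as `(j+1)`'s, `j ≥ 1`. -/
def IsYamanouchi (w : List ℕ) : Prop :=
  ∀ j k, 0 < j → (w.take k).count (j + 1) ≤ (w.take k).count j

/-- Entrywise sum `α + v` (padding `v` with zeros). -/
def padAdd (α v : List ℕ) : List ℕ :=
  List.ofFn fun i : Fin α.length => α.get i + v.getD i 0

section ImmaculateAux

open FreeAlgebra Submodule

/-- The monomial `H_{l_1} ⋯ H_{l_k}` for a list of positive integers. -/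
noncomputable def bword (l : List ℕ) : NSym := (l.map (FreeAlgebra.ι ℚ)).prod

lemma equiv_bword (l : List ℕ) :
    FreeAlgebra.equivMonoidAlgebraFreeMonoid (R := ℚ) (X := ℕ) (bword l) =
      MonoidAlgebra.single (FreeMonoid.ofList l) 1 := by
  induction l with
  | nil =>
      have : bword [] = 1 := by simp [bword]
      rw [this, map_one]
      rfl
  | cons a l ih =>
      have hb : bword (a :: l) = FreeAlgebra.ι ℚ a * bword l := by simp [bword]
      have hι : FreeAlgebra.equivMonoidAlgebraFreeMonoid (R := ℚ) (X := ℕ)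
          (FreeAlgebra.ι ℚ a) = MonoidAlgebra.single (FreeMonoid.of a) 1 := by
        simp [FreeAlgebra.equivMonoidAlgebraFreeMonoid, FreeAlgebra.lift_ι_apply,
          MonoidAlgebra.of_apply]
      rw [hb, map_mul, ih, hι, MonoidAlgebra.single_mul_single, one_mul,
        ← FreeMonoid.ofList_cons]

lemma bword_eq_basis (l : List ℕ) :
    bword l = FreeAlgebra.basisFreeMonoid ℚ ℕ (FreeMonoid.ofList l) := by
  have h1 : FreeAlgebra.basisFreeMonoid ℚ ℕ (FreeMonoid.ofList l) =
      (FreeAlgebra.equivMonoidAlgebraFreeMonoid (R := ℚ) (X := ℕ)).symm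
        (MonoidAlgebra.single (FreeMonoid.ofList l) 1) := by
    rw [FreeAlgebra.basisFreeMonoid, Module.Basis.map_apply, Finsupp.coe_basisSingleOne]
    rfl
  rw [h1, ← equiv_bword, AlgEquiv.symm_apply_apply]

lemma H_natCast (a : ℕ) (ha : 0 < a) : H (a : ℤ) = FreeAlgebra.ι ℚ a := by
  have h0 : ¬ ((a : ℤ) < 0) := by exact_mod_cast Nat.not_lt_zero a
  have h1 : ¬ ((a : ℤ) = 0) := by exact_mod_cast Nat.pos_iff_ne_zero.mp ha
  simp [H, h0, h1, ha.ne']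

lemma H_zero : H 0 = 1 := by simp [H]

lemma Hprod_nil : Hprod [] = 1 := by simp [Hprod]

lemma Hprod_cons (a : ℤ) (l : List ℤ) : Hprod (a :: l) = H a * Hprod l := by
  simp [Hprod]

lemma Hprod_natCast (l : List ℕ) (h : ∀ x ∈ l, 0 < x) :
    Hprod (l.map (fun x : ℕ => (x : ℤ))) = bword l := by
  induction l with
  | nil => simp [Hprod, bword]
  | cons a l ih =>
      have ha : 0 < a := h a (by simp)
      have hbc : bword (a :: l) = FreeAlgebra.ι ℚ a * bword l := by simp [bword]
      rw [List.map_cons, Hprod_cons, H_natCast a ha, ih (fun x hx => h x (by simp [hx])), hbc]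

lemma Hprod_filter (l : List ℕ) :
    Hprod (l.map (fun x : ℕ => (x : ℤ))) = Hprod ((l.filter (· ≠ 0)).map (fun x : ℕ => (x : ℤ))) := by
  induction l with
  | nil => simp
  | cons a l ih =>
      by_cases ha : a = 0
      · subst ha
        rw [List.map_cons, Hprod_cons]
        have : H ((0 : ℕ) : ℤ) = 1 := by exact_mod_cast H_zero
        rw [this, one_mul, ih]
        simp
      · rw [List.map_cons, Hprod_cons, ih]
        have : (a :: l).filter (· ≠ 0) = a :: (l.filter (· ≠ 0)) := by
          simp [List.filter_cons, ha]
        rw [this, List.map_cons, Hprod_cons]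

lemma sum_filter_ne_zero' (l : List ℕ) : (l.filter (· ≠ 0)).sum = l.sum := by
  induction l with
  | nil => rfl
  | cons a l ih =>
      by_cases ha : a = 0
      · subst ha; simpa [List.filter_cons] using ih
      · rw [List.filter_cons_of_pos (by simp [ha]), List.sum_cons, ih, List.sum_cons]

lemma lex_of_get : ∀ (t : ℕ) (p q : List ℕ) (hp : t < p.length) (hq : t < q.length),
    (∀ j (hj : j < t), p[j]'(by omega) = q[j]'(by omega)) →
    p[t]'hp < q[t]'hq → p < q := by
  intro t
  induction t with
  | zero =>
      intro p q hp hq _ hlt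
      match p, q with
      | a :: p', b :: q' =>
          exact List.Lex.rel (by simpa using hlt)
  | succ t ih =>
      intro p q hp hq hpre hlt
      match p, q with
      | a :: p', b :: q' =>
          have hab : a = b := by simpa using hpre 0 (Nat.succ_pos t)
          subst hab
          exact List.Lex.cons (ih p' q' (by simpa using hp) (by simpa using hq)
            (fun j hj => by simpa using hpre (j+1) (by omega))
            (by simpa using hlt))

lemma natCast_list_sum (l : List ℕ) :
    (l.map (fun x : ℕ => (x : ℤ))).sum = ((l.sum : ℕ) : ℤ) := by
  induction l with
  | nil => simp
  | cons a l ih => rw [List.map_cons, List.sum_cons, List.sum_cons, ih]; push_cast; ring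

end ImmaculateAux


section ImmaculateMain

open Submodule

/-- The subtype of compositions of `n`. -/
abbrev CompT (n : ℕ) := {l : List ℕ // IsComposition l ∧ l.sum = n}

/-- Compositions of `n` (as a subtype) biject with `Composition n`. -/
def compEquiv (n : ℕ) : CompT n ≃ Composition n where
  toFun α := ⟨α.1, fun hi => α.2.1 _ hi, α.2.2⟩
  invFun c := ⟨c.blocks, fun x hx => c.blocks_pos hx, c.blocks_sum⟩
  left_inv α := rfl
  right_inv c := rfl

noncomputable instance (n : ℕ) : Fintype (CompT n) :=
  Fintype.ofEquiv _ (compEquiv n).symm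

lemma bword_linearIndependent (n : ℕ) :
    LinearIndependent ℚ (fun α : CompT n => bword α.1) := by
  have h : (fun α : CompT n => bword α.1) =
      (FreeAlgebra.basisFreeMonoid ℚ ℕ) ∘ (fun α : CompT n => FreeMonoid.ofList α.1) :=
    funext fun α => bword_eq_basis α.1
  rw [h]
  exact (FreeAlgebra.basisFreeMonoid ℚ ℕ).linearIndependent.comp _
    (FreeMonoid.ofList.injective.comp Subtype.val_injective)

lemma immaculate_sub_mem (n : ℕ) (α : CompT n) :
    immaculate α.1 - bword α.1 ∈
      span ℚ ((fun β : CompT n => bword β.1) '' Set.Ioi α) := by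
  classical
  set k := α.1.length with hk
  -- the identity permutation contributes the leading term `bword α`
  have hid : ((Equiv.Perm.sign (1 : Equiv.Perm (Fin α.1.length)) : ℤ)) •
      Hprod (List.ofFn fun i => ((α.1.get i : ℤ) + (((1 : Equiv.Perm (Fin α.1.length)) i : ℕ) : ℤ)
        - ((i : ℕ) : ℤ))) = bword α.1 := by
    rw [map_one]
    norm_num
    have hl : (List.map (Nat.cast : ℕ → ℤ) α.1) = α.1.map (fun x : ℕ => (x : ℤ)) := rfl
    rw [hl, Hprod_natCast _ α.2.1]
  have hsplit : immaculate α.1 - bword α.1 =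
      ∑ σ ∈ (Finset.univ : Finset (Equiv.Perm (Fin α.1.length))).erase 1,
        ((Equiv.Perm.sign σ : ℤ)) • Hprod (List.ofFn fun i =>
          ((α.1.get i : ℤ) + ((σ i : ℕ) : ℤ) - ((i : ℕ) : ℤ))) := by
    rw [immaculate, ← Finset.add_sum_erase _ _ (Finset.mem_univ 1), hid]
    abel
  rw [hsplit]
  apply Submodule.sum_mem
  intro σ hσmem
  have hσ1 : σ ≠ 1 := (Finset.mem_erase.mp hσmem).1
  set E : Fin α.1.length → ℤ :=
    fun i => ((α.1.get i : ℤ) + ((σ i : ℕ) : ℤ) - ((i : ℕ) : ℤ)) with hE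
  by_cases hneg : ∀ i, 0 ≤ E i
  · -- all entries nonnegative: the term is `± bword γ` for a strictly larger composition `γ`
    set m : List ℕ := List.ofFn (fun i => (E i).toNat) with hm
    have hmlen : m.length = α.1.length := by simp [hm]
    have hmE : List.ofFn E = m.map (fun x : ℕ => (x : ℤ)) := by
      apply List.ext_getElem
        (by simp only [hm, List.length_ofFn, List.length_map])
      intro i h1 h2
      simp only [hm, List.getElem_ofFn, List.getElem_map]
      exact (Int.toNat_of_nonneg (hneg _)).symm
    set γ : List ℕ := m.filter (· ≠ 0) with hγ
    have hHm : Hprod (List.ofFn E) = bword γ := by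
      rw [hmE, Hprod_filter, Hprod_natCast]
      intro x hx
      exact Nat.pos_of_ne_zero (by simpa using List.of_mem_filter hx)
    have hγcomp : IsComposition γ := by
      intro x hx
      exact Nat.pos_of_ne_zero (by simpa using List.of_mem_filter hx)
    have hγsum : γ.sum = n := by
      have h1 : γ.sum = m.sum := sum_filter_ne_zero' m
      have h2 : ((m.sum : ℕ) : ℤ) = (n : ℤ) := by
        have hmap := natCast_list_sum m
        rw [← hmap, ← hmE, List.sum_ofFn]
        have hperm : ∑ i : Fin α.1.length, ((σ i : ℕ) : ℤ) =
            ∑ i : Fin α.1.length, ((i : ℕ) : ℤ) :=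
          Equiv.sum_comp σ (fun i : Fin α.1.length => ((i : ℕ) : ℤ))
        have hα : ∑ i : Fin α.1.length, (α.1.get i : ℤ) = (n : ℤ) := by
          have : (α.1.map (fun x : ℕ => (x : ℤ))).sum = ((α.1.sum : ℕ) : ℤ) :=
            natCast_list_sum α.1
          rw [α.2.2] at this
          rw [← this]
          have hofn : α.1.map (fun x : ℕ => (x : ℤ)) =
              List.ofFn (fun i : Fin α.1.length => (α.1.get i : ℤ)) := by
            apply List.ext_getElem (by simp)
            intro i h1 h2
            simp [List.get_eq_getElem]
          rw [hofn, List.sum_ofFn]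
        simp only [hE]
        rw [Finset.sum_sub_distrib, Finset.sum_add_distrib, hperm, hα]
        ring
      exact h1.trans (by exact_mod_cast h2)
    -- find the first non-fixed point of σ
    have hex : ∃ i, σ i ≠ i := by
      by_contra h
      push_neg at h
      exact hσ1 (Equiv.ext fun i => (h i).trans (Equiv.Perm.one_apply i).symm)
    obtain ⟨iw, hiw⟩ := hex
    have hex2 : ∃ i0 : Fin α.1.length, σ i0 ≠ i0 ∧ ∀ j, σ j ≠ j → i0 ≤ j := by
      classical
      set s : Finset (Fin α.1.length) := Finset.univ.filter (fun i => σ i ≠ i) with hs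
      have hsne : s.Nonempty := ⟨iw, Finset.mem_filter.mpr ⟨Finset.mem_univ _, hiw⟩⟩
      refine ⟨s.min' hsne, (Finset.mem_filter.mp (s.min'_mem hsne)).2, fun j hj => ?_⟩
      exact s.min'_le j (Finset.mem_filter.mpr ⟨Finset.mem_univ _, hj⟩)
    obtain ⟨i0, hi0, hi0min⟩ := hex2
    have hfix : ∀ j : Fin α.1.length, j < i0 → σ j = j := by
      intro j hj
      by_contra hne'
      exact absurd (hi0min j hne') (not_le.mpr hj)
    have hgt : (i0 : ℕ) < ((σ i0 : Fin α.1.length) : ℕ) := by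
      rcases lt_trichotomy (σ i0) i0 with h | h | h
      · exact absurd (σ.injective (hfix (σ i0) h)) hi0
      · exact absurd h hi0
      · exact h
    set t := (i0 : ℕ) with ht
    have htk : t < α.1.length := i0.isLt
    have hmj : ∀ (j : ℕ) (hj : j < α.1.length),
        m[j]'(by omega) = (E ⟨j, hj⟩).toNat := by
      intro j hj
      simp only [hm, List.getElem_ofFn]
    have hEfix : ∀ (j : ℕ) (hj : j < t), (E ⟨j, by omega⟩) = (α.1.get ⟨j, by omega⟩ : ℤ) := by
      intro j hj
      have hjlt : (⟨j, by omega⟩ : Fin α.1.length) < i0 := by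
        rw [Fin.lt_def]; exact hj
      simp only [hE]
      rw [hfix _ hjlt]
      push_cast
      ring
    have hEi0 : (α.1.get i0 : ℤ) < E i0 := by
      simp only [hE]
      have : ((i0 : ℕ) : ℤ) < ((σ i0 : Fin α.1.length) : ℕ) := by exact_mod_cast hgt
      omega
    have hαpos : ∀ (j : ℕ) (hj : j < α.1.length), 0 < α.1.get ⟨j, hj⟩ := by
      intro j hj
      apply α.2.1
      rw [List.get_eq_getElem]
      exact List.getElem_mem _
    -- positivity of the first t+1 entries of m
    have hmpos : ∀ (j : ℕ) (hj : j < t + 1), m[j]'(by omega) ≠ 0 := by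
      intro j hj
      rcases Nat.lt_or_ge j t with h | h
      · rw [hmj j (by omega), hEfix j h]
        simpa using Nat.pos_iff_ne_zero.mp (hαpos j (by omega))
      · have hjt : j = t := by omega
        rw [hmj j (by omega)]
        have hfin : (⟨j, by omega⟩ : Fin α.1.length) = i0 :=
          Fin.ext (show j = (i0 : ℕ) by omega)
        rw [hfin]
        have h0 : (0 : ℤ) < E i0 :=
          lt_of_le_of_lt (by exact_mod_cast Nat.zero_le _) hEi0
        intro hzero
        rw [Int.toNat_eq_zero] at hzero
        omega
    set u : List ℕ := m.take (t + 1) with hu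
    have hulen : u.length = t + 1 := by
      simp [hu, hmlen]
      omega
    have huget : ∀ (j : ℕ) (hj : j < t + 1), u[j]'(by omega) = m[j]'(by omega) := by
      intro j hj
      simp [hu]
    have hufilter : u.filter (· ≠ 0) = u := by
      apply List.filter_eq_self.mpr
      intro x hx
      obtain ⟨j, hj, rfl⟩ := List.mem_iff_getElem.mp hx
      have hj' : j < t + 1 := by omega
      rw [huget j hj']
      simpa using hmpos j hj'
    have hγdecomp : γ = u ++ (m.drop (t + 1)).filter (· ≠ 0) := by
      conv_lhs => rw [hγ, ← List.take_append_drop (t + 1) m, List.filter_append]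
      rw [← hu, hufilter]
    have hγlen : t < γ.length := by
      rw [hγdecomp, List.length_append, hulen]
      omega
    have hγget : ∀ (j : ℕ) (hj : j < t + 1), γ[j]'(by omega) = m[j]'(by omega) := by
      intro j hj
      rw [List.getElem_of_eq hγdecomp, List.getElem_append_left (by omega), huget j hj]
    have hlt : α.1 < γ := by
      apply lex_of_get t α.1 γ htk hγlen
      · intro j hj
        rw [hγget j (by omega), hmj j (by omega), hEfix j hj]
        simp [List.get_eq_getElem]
      · rw [hγget t (by omega), hmj t htk]
        have : α.1[t]'htk = α.1.get ⟨t, htk⟩ := by simp [List.get_eq_getElem]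
        rw [this]
        have heq : (⟨t, htk⟩ : Fin α.1.length) = i0 := rfl
        rw [heq]
        exact Int.lt_toNat.mpr hEi0
    rw [hHm]
    refine Submodule.smul_mem _ _ (Submodule.subset_span ?_)
    exact ⟨⟨γ, hγcomp, hγsum⟩, Set.mem_Ioi.mpr (Subtype.mk_lt_mk.mpr hlt), rfl⟩
  · -- some entry is negative: the term vanishes
    push_neg at hneg
    obtain ⟨i, hi⟩ := hneg
    have hzero : Hprod (List.ofFn E) = 0 := by
      apply List.prod_eq_zero
      refine List.mem_map.mpr ⟨E i, ?_, by simp [H, hi]⟩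
      simp only [List.mem_ofFn, Set.mem_range]
      exact ⟨i, rfl⟩
    rw [hE] at hzero
    rw [hzero, smul_zero]
    exact zero_mem _

lemma weird_cast_eq (l : List ℕ) :
    (l.map fun x => (x : ℤ)) = l.map (fun x : ℕ => (x : ℤ)) := by
  induction l with
  | nil => rfl
  | cons a l ih =>
      show List.map (fun x : ℤ => x) _ = _
      simp only [List.map_id'] at ih ⊢
      simp_all

end ImmaculateMain

/-- for every `n ≥ 0`, the immaculate functions `{𝔖_α : α ⊨ n}` form a
basis of the degree-`n` homogeneous component of `NSym` (the span of the `H_α`,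
`α ⊨ n`): they are linearly independent and span that component. -/
theorem immaculate_basis_of_degree_n (n : ℕ) :
    LinearIndependent ℚ (fun α : {l : List ℕ // IsComposition l ∧ l.sum = n} =>
      immaculate α.1) ∧
    Submodule.span ℚ
        (Set.range fun α : {l : List ℕ // IsComposition l ∧ l.sum = n} =>
          immaculate α.1) =
      Submodule.span ℚ
        {x : NSym | ∃ l : List ℕ, IsComposition l ∧ l.sum = n ∧
          x = Hprod (l.map fun x => (x : ℤ))} := by
  classical
  set bfun : CompT n → NSym := fun α => bword α.1 with hbfun
  have hbLI : LinearIndependent ℚ bfun := bword_linearIndependent n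
  set N : Submodule ℚ NSym := Submodule.span ℚ (Set.range bfun) with hN
  set B : Module.Basis (CompT n) ℚ N := Module.Basis.span hbLI with hB
  have hfmem : ∀ α : CompT n, immaculate α.1 ∈ N := by
    intro α
    have h1 : bfun α ∈ N := Submodule.subset_span ⟨α, rfl⟩
    have h2 : immaculate α.1 - bword α.1 ∈ N :=
      Submodule.span_mono (Set.image_subset_range _ _) (immaculate_sub_mem n α)
    have h3 := N.add_mem h1 h2
    simpa [hbfun] using h3
  set v : CompT n → N := fun α => ⟨immaculate α.1, hfmem α⟩ with hv
  have hBv : ∀ α : CompT n, v α - B α ∈ Submodule.span ℚ (B '' Set.Ioi α) := by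
    intro α
    have hmem := immaculate_sub_mem n α
    have himg : (N.subtype) '' (B '' Set.Ioi α) = bfun '' Set.Ioi α := by
      rw [← Set.image_comp]
      apply Set.image_congr
      intro β _
      exact congrArg Subtype.val (Module.Basis.span_apply hbLI β)
    have hmap : Submodule.map N.subtype (Submodule.span ℚ (B '' Set.Ioi α)) =
        Submodule.span ℚ (bfun '' Set.Ioi α) := by
      rw [Submodule.map_span, himg]
    have hx : (N.subtype) (v α - B α) ∈
        Submodule.map N.subtype (Submodule.span ℚ (B '' Set.Ioi α)) := by
      rw [hmap]
      have hvb : (N.subtype) (v α - B α) = immaculate α.1 - bword α.1 := by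
        rw [map_sub]
        simp only [hv, hB]
        show immaculate α.1 - ((Module.Basis.span hbLI) α : NSym) = _
        rw [Module.Basis.span_apply hbLI α]
      rw [hvb]
      exact hmem
    obtain ⟨y, hy, hyeq⟩ := hx
    have hyv : y = v α - B α := Subtype.val_injective hyeq
    rwa [hyv] at hy
  set A : Matrix (CompT n) (CompT n) ℚ := B.toMatrix v with hA
  have hsupp : ∀ (i j : CompT n), ¬ (i < j) → (B.repr (v i - B i)) j = 0 := by
    intro i j hij
    by_contra h
    exact hij (Set.mem_Ioi.mp ((Module.Basis.mem_span_image B).mp (hBv i)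
      (Finsupp.mem_support_iff.mpr h)))
  have hArepr : ∀ i j : CompT n, A i j =
      (Finsupp.single j (1 : ℚ)) i + (B.repr (v j - B j)) i := by
    intro i j
    rw [hA, Module.Basis.toMatrix_apply]
    have : B.repr (v j) = B.repr (B j) + B.repr (v j - B j) := by
      rw [← map_add]
      congr 1
      abel
    rw [this, Module.Basis.repr_self]
    rfl
  have htri : ∀ i j : CompT n, i < j → A i j = 0 := by
    intro i j hij
    rw [hArepr i j, hsupp j i (fun h => lt_asymm hij h),
      Finsupp.single_apply, if_neg (by exact fun h => absurd h (ne_of_gt hij))]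
    ring
  have hdiag : ∀ i : CompT n, A i i = 1 := by
    intro i
    rw [hArepr i i, hsupp i i (lt_irrefl i), Finsupp.single_apply, if_pos rfl]
    ring
  have hdet : A.det = 1 := by
    rw [Matrix.det_of_lowerTriangular A (fun i j hij => htri i j (by simpa using hij))]
    exact Finset.prod_eq_one (fun i _ => hdiag i)
  have hunit : IsUnit (B.det v) := by
    rw [Module.Basis.det_apply, ← hA, hdet]
    exact isUnit_one
  obtain ⟨hLIv, hspanv⟩ := (Module.Basis.is_basis_iff_det B).mpr hunit
  constructor
  · exact hLIv.map' N.subtype N.ker_subtype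
  · have h1 : Submodule.span ℚ (Set.range fun α : CompT n => immaculate α.1) =
        Submodule.map N.subtype (Submodule.span ℚ (Set.range v)) := by
      rw [Submodule.map_span]
      congr 1
      rw [← Set.range_comp]
      rfl
    rw [h1, hspanv, Submodule.map_top, Submodule.range_subtype, hN]
    congr 1
    ext x
    constructor
    · rintro ⟨α, rfl⟩
      refine ⟨α.1, α.2.1, α.2.2, ?_⟩
      rw [weird_cast_eq, Hprod_natCast α.1 α.2.1]
    · rintro ⟨l, hc, hs, rfl⟩
      refine ⟨⟨l, hc, hs⟩, ?_⟩
      show bword l = _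
      rw [weird_cast_eq, Hprod_natCast l hc]
end
end

section
/- (Right Pieri rule) For every composition α and every positive integer s, 𝔖_α · H_s = Σ_β 𝔖_β, where the sum is over all compositions β with α ⊂_s β, i.e. |β| = |α| + s, α_j ≤ β_j for all 1 ≤ j ≤ ℓ(α), and ℓ(β) ≤ ℓ(α) + 1. -/
open scoped BigOperators

noncomputable section

namespace RightPieriAux

open Equiv Finset

lemma H_of_neg {n : ℤ} (h : n < 0) : H n = 0 := by simp [H, h]

lemma H_zero : H 0 = 1 := by simp [H]

lemma Hprod_append (l1 l2 : List ℤ) : Hprod (l1 ++ l2) = Hprod l1 * Hprod l2 := by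
  simp [Hprod]

lemma Hprod_concat (l : List ℤ) (x : ℤ) : Hprod (l.concat x) = Hprod l * H x := by
  simp [Hprod]

lemma Hprod_eq_zero {l : List ℤ} {x : ℤ} (hx : x ∈ l) (h : x < 0) : Hprod l = 0 := by
  apply List.prod_eq_zero
  exact List.mem_map.2 ⟨x, hx, H_of_neg h⟩

/-- `SFin n c`: immaculate-type sum for an arbitrary integer vector. -/
noncomputable def SFin (n : ℕ) (c : Fin n → ℤ) : NSym :=
  ∑ σ : Equiv.Perm (Fin n),
    ((Equiv.Perm.sign σ : ℤ)) •
      Hprod (List.ofFn fun i => (c i + ((σ i : ℕ) : ℤ) - ((i : ℕ) : ℤ)))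

lemma immaculate_eq_SFin (l : List ℕ) :
    immaculate l = SFin l.length (fun i => (l.get i : ℤ)) := rfl

lemma SFin_congr {n n' : ℕ} (h : n = n') (c : Fin n → ℤ) (c' : Fin n' → ℤ)
    (hc : ∀ i : Fin n, c i = c' (Fin.cast h i)) : SFin n c = SFin n' c' := by
  subst h
  have : c = c' := funext fun i => hc i
  rw [this]

/-- extend a permutation of `Fin k` to `Fin (k+1)` fixing the last element. -/
def ext1 {k : ℕ} (σ : Equiv.Perm (Fin k)) : Equiv.Perm (Fin (k + 1)) :=
  (Equiv.permCongr finSumFinEquiv) (σ.sumCongr (Equiv.refl (Fin 1)))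

lemma ext1_castSucc {k : ℕ} (σ : Equiv.Perm (Fin k)) (i : Fin k) :
    ext1 σ i.castSucc = (σ i).castSucc := by
  have h : i.castSucc = Fin.castAdd 1 i := rfl
  rw [ext1, Equiv.permCongr_apply, h, finSumFinEquiv_symm_apply_castAdd]
  simp
  rfl

lemma ext1_last {k : ℕ} (σ : Equiv.Perm (Fin k)) : ext1 σ (Fin.last k) = Fin.last k := by
  rw [ext1, Equiv.permCongr_apply, finSumFinEquiv_symm_last]
  simp
  rfl

lemma sign_ext1 {k : ℕ} (σ : Equiv.Perm (Fin k)) :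
    Equiv.Perm.sign (ext1 σ) = Equiv.Perm.sign σ := by
  simp [ext1, Equiv.Perm.sign_permCongr, Equiv.Perm.sign_sumCongr]

end RightPieriAux
namespace RightPieriAux
open Equiv Finset

lemma castSucc_ne_last {k : ℕ} (i : Fin k) : i.castSucc ≠ Fin.last k :=
  ne_of_lt (Fin.castSucc_lt_last i)

/-- restrict a permutation fixing the last element -/
def res {k : ℕ} (σ : Equiv.Perm (Fin (k + 1))) (h : σ (Fin.last k) = Fin.last k) :
    Equiv.Perm (Fin k) where
  toFun i := (σ i.castSucc).castPred (by
    intro he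
    exact castSucc_ne_last i (σ.injective (he.trans h.symm)))
  invFun i := (σ.symm i.castSucc).castPred (by
    intro he
    have h' : σ.symm (Fin.last k) = Fin.last k := by
      rw [← h, Equiv.symm_apply_apply]
      exact h.symm
    exact castSucc_ne_last i (σ.symm.injective (he.trans h'.symm)))
  left_inv i := by
    apply Fin.castSucc_injective
    simp [Fin.castSucc_castPred]
  right_inv i := by
    apply Fin.castSucc_injective
    simp [Fin.castSucc_castPred]

lemma ext1_res {k : ℕ} (σ : Equiv.Perm (Fin (k + 1))) (h : σ (Fin.last k) = Fin.last k) :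
    ext1 (res σ h) = σ := by
  apply Equiv.ext
  intro i
  induction i using Fin.lastCases with
  | last => rw [ext1_last, h]
  | cast j =>
      rw [ext1_castSucc]
      show ((res σ h) j).castSucc = _
      rw [res]
      simp [Fin.castSucc_castPred]

lemma ext1_injective {k : ℕ} : Function.Injective (ext1 (k := k)) := by
  intro σ τ hh
  apply Equiv.ext
  intro i
  apply Fin.castSucc_injective
  rw [← ext1_castSucc σ i, ← ext1_castSucc τ i, hh]

/-- Splitting a sum over permutations of `Fin (k+1)`, when terms not fixing the
last element vanish. -/
lemma sum_perm_split {k : ℕ} {M : Type*} [AddCommMonoid M] (F : Equiv.Perm (Fin (k + 1)) → M)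
    (h0 : ∀ σ, σ (Fin.last k) ≠ Fin.last k → F σ = 0) :
    ∑ σ : Equiv.Perm (Fin (k + 1)), F σ = ∑ σ : Equiv.Perm (Fin k), F (ext1 σ) := by
  rw [← Finset.sum_filter_of_ne (p := fun σ => σ (Fin.last k) = Fin.last k)
    (by intro σ _ hF; by_contra hne; exact hF (h0 σ hne))]
  refine (Finset.sum_bij (fun (τ : Equiv.Perm (Fin k)) _ => ext1 τ) ?_ ?_ ?_ ?_).symm
  · intro τ _
    simp [ext1_last]
  · intro τ₁ _ τ₂ _ hh
    exact ext1_injective hh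
  · intro σ hσ
    refine ⟨res σ (by simpa using hσ), Finset.mem_univ _, (ext1_res σ _)⟩
  · intro τ _
    rfl

end RightPieriAux
namespace RightPieriAux
open Equiv Finset

lemma SFin_snoc_zero {k : ℕ} (c : Fin k → ℤ) :
    SFin (k + 1) (Fin.snoc c 0) = SFin k c := by
  unfold SFin
  rw [sum_perm_split]
  · refine Finset.sum_congr rfl fun τ _ => ?_
    rw [sign_ext1]
    congr 1
    rw [List.ofFn_succ', List.concat_eq_append, Hprod_append]
    have hlast : ((Fin.snoc c 0 : Fin (k+1) → ℤ) (Fin.last k) + (((ext1 τ) (Fin.last k) : ℕ) : ℤ)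
        - ((Fin.last k : ℕ) : ℤ)) = 0 := by
      rw [Fin.snoc_last, ext1_last]
      simp
    rw [hlast]
    have : Hprod [(0 : ℤ)] = 1 := by simp [Hprod, H_zero]
    rw [this, mul_one]
    refine congrArg Hprod (congrArg List.ofFn (funext fun i => ?_))
    rw [Fin.snoc_castSucc, ext1_castSucc]
    simp
  · intro σ hσ
    have hneg : ((Fin.snoc c 0 : Fin (k+1) → ℤ) (Fin.last k) + (((σ (Fin.last k)) : ℕ) : ℤ)
        - ((Fin.last k : ℕ) : ℤ)) < 0 := by
      rw [Fin.snoc_last]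
      have : (σ (Fin.last k) : ℕ) < k := by
        have := Fin.lt_last_iff_ne_last.mpr hσ
        simpa [Fin.lt_def] using this
      push_cast
      omega
    rw [Hprod_eq_zero _ hneg, smul_zero]
    rw [List.mem_ofFn]
    exact ⟨Fin.last k, rfl⟩

end RightPieriAux
namespace RightPieriAux
open Equiv Finset

variable {k : ℕ}

/-- 0-1 matrix whose determinant is the signed count of permutations below `t`. -/
def Nmat (t : Fin (k + 1) → ℤ) : Matrix (Fin (k + 1)) (Fin (k + 1)) ℤ :=
  Matrix.of fun a j => if ((a : ℕ) : ℤ) ≤ t j then 1 else 0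

/-- signed count of permutations dominated by `t` -/
def Dcoef (t : Fin (k + 1) → ℤ) : ℤ :=
  ∑ σ ∈ Finset.univ.filter (fun σ : Equiv.Perm (Fin (k + 1)) => ∀ i, ((σ i : ℕ) : ℤ) ≤ t i),
    ((Equiv.Perm.sign σ : ℤˣ) : ℤ)

lemma Dcoef_eq_det (t : Fin (k + 1) → ℤ) : Dcoef t = (Nmat t).det := by
  rw [Matrix.det_apply', Dcoef, Finset.sum_filter]
  refine Finset.sum_congr rfl fun σ _ => ?_
  have : ∏ i, Nmat t (σ i) i = if ∀ i ∈ Finset.univ, ((σ i : ℕ) : ℤ) ≤ t i then 1 else 0 := by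
    rw [show (∏ i, Nmat t (σ i) i)
        = ∏ i, (if ((σ i : ℕ) : ℤ) ≤ t i then (1:ℤ) else 0) from rfl, Finset.prod_boole]
    congr
  rw [this]
  simp only [Finset.mem_univ, forall_true_left]
  split_ifs <;> simp

lemma Dcoef_eq_zero_of_caps (t : Fin (k + 1) → ℤ) {i j : Fin (k + 1)} (hij : i ≠ j)
    (h : min (t i) (k : ℤ) = min (t j) (k : ℤ)) : Dcoef t = 0 := by
  rw [Dcoef_eq_det]
  apply Matrix.det_zero_of_column_eq hij
  intro a
  have ha : ((a : ℕ) : ℤ) ≤ (k : ℤ) := by exact_mod_cast Nat.lt_succ_iff.mp a.isLt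
  show (if ((a : ℕ) : ℤ) ≤ t i then (1:ℤ) else 0) = if ((a : ℕ) : ℤ) ≤ t j then 1 else 0
  have : (((a : ℕ) : ℤ) ≤ t i) ↔ (((a : ℕ) : ℤ) ≤ t j) := by
    rw [show (((a : ℕ) : ℤ) ≤ t i) ↔ ((a : ℕ) : ℤ) ≤ min (t i) (k:ℤ) by
          rw [le_min_iff]; tauto,
        show (((a : ℕ) : ℤ) ≤ t j) ↔ ((a : ℕ) : ℤ) ≤ min (t j) (k:ℤ) by
          rw [le_min_iff]; tauto, h]
  simp only [this]

/-- the target vector `(σ₀(0),…,σ₀(k-1), k+s)` -/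
def tgtv (s : ℕ) (σ₀ : Equiv.Perm (Fin k)) : Fin (k + 1) → ℤ :=
  Fin.snoc (fun i => ((σ₀ i : ℕ) : ℤ)) ((k : ℤ) + (s : ℕ))

lemma Dcoef_tgtv (s : ℕ) (σ₀ : Equiv.Perm (Fin k)) :
    Dcoef (tgtv s σ₀) = ((Equiv.Perm.sign σ₀ : ℤˣ) : ℤ) := by
  rw [Dcoef_eq_det]
  have hL : Nmat (tgtv s σ₀) =
      (Matrix.of fun a b : Fin (k+1) => if a ≤ b then (1:ℤ) else 0).submatrix id (ext1 σ₀) := by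
    ext a j
    show (if ((a : ℕ) : ℤ) ≤ tgtv s σ₀ j then (1:ℤ) else 0)
        = if a ≤ ext1 σ₀ j then (1:ℤ) else 0
    induction j using Fin.lastCases with
    | last =>
        rw [ext1_last]
        have h1 : ((a : ℕ) : ℤ) ≤ tgtv s σ₀ (Fin.last k) := by
          show ((a : ℕ) : ℤ) ≤ (Fin.snoc _ _ : Fin (k+1) → ℤ) (Fin.last k)
          rw [Fin.snoc_last]
          have : (a : ℕ) ≤ k := Nat.lt_succ_iff.mp a.isLt
          omega
        rw [if_pos h1, if_pos (Fin.le_last a)]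
    | cast i =>
        rw [ext1_castSucc]
        have h2 : tgtv s σ₀ i.castSucc = ((σ₀ i : ℕ) : ℤ) := by
          show (Fin.snoc _ _ : Fin (k+1) → ℤ) i.castSucc = _
          rw [Fin.snoc_castSucc]
        rw [h2]
        have : (((a : ℕ) : ℤ) ≤ ((σ₀ i : ℕ) : ℤ)) ↔ (a ≤ (σ₀ i).castSucc) := by
          rw [Fin.le_def]
          simp
        simp only [this]
  rw [hL, Matrix.det_permute', sign_ext1]
  have hdet : (Matrix.of fun a b : Fin (k+1) => if a ≤ b then (1:ℤ) else 0).det = 1 := by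
    rw [Matrix.det_of_upperTriangular]
    · simp
    · intro a b hba
      show (if a ≤ b then (1:ℤ) else 0) = 0
      rw [if_neg (not_le.mpr (by simpa using hba))]
  rw [hdet, mul_one]
  rfl

end RightPieriAux
namespace RightPieriAux
open Equiv Finset

variable {k : ℕ}

/-- The monomial attached to a shift vector `t`. -/
noncomputable def Wt (av t : Fin (k + 1) → ℤ) : NSym :=
  Hprod (List.ofFn fun i => av i - ((i : ℕ) : ℤ) + t i)

lemma sum_fin_succ_coe (k : ℕ) :
    (∑ i : Fin (k + 1), ((i : ℕ) : ℤ)) = (∑ i : Fin k, ((i : ℕ) : ℤ)) + k := by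
  rw [Fin.sum_univ_castSucc]
  simp

lemma sum_perm_coe (σ₀ : Equiv.Perm (Fin k)) :
    ∑ i, ((σ₀ i : ℕ) : ℤ) = ∑ i : Fin k, ((i : ℕ) : ℤ) :=
  Equiv.sum_comp σ₀ (fun x : Fin k => ((x : ℕ) : ℤ))

lemma sum_tgtv (s : ℕ) (σ₀ : Equiv.Perm (Fin k)) :
    ∑ i, tgtv s σ₀ i = (∑ i : Fin (k + 1), ((i : ℕ) : ℤ)) + s := by
  rw [Fin.sum_univ_castSucc (f := tgtv s σ₀), sum_fin_succ_coe]
  unfold tgtv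
  simp only [Fin.snoc_castSucc, Fin.snoc_last]
  rw [sum_perm_coe]
  ring

lemma per_t (s : ℕ) (av t : Fin (k + 1) → ℤ) (hav : av (Fin.last k) = 0)
    (hbox : ∀ i, 0 ≤ t i)
    (hsum : ∑ i, t i = (∑ i : Fin (k + 1), ((i : ℕ) : ℤ)) + s)
    (hnot : ∀ σ₀ : Equiv.Perm (Fin k), t ≠ tgtv s σ₀) :
    Dcoef t • Wt av t = 0 := by
  by_cases hinj : Function.Injective (fun i => min (t i) (k : ℤ))
  · by_cases hlast : (k : ℤ) ≤ t (Fin.last k)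
    · -- t must be a target vector: contradiction
      exfalso
      have hlt : ∀ i : Fin k, t i.castSucc < k := by
        intro i
        by_contra hge
        push_neg at hge
        have h1 : min (t i.castSucc) (k : ℤ) = min (t (Fin.last k)) (k : ℤ) := by
          rw [min_eq_right hge, min_eq_right hlast]
        exact castSucc_ne_last i (hinj h1)
      set σf : Fin k → Fin k := fun i => ⟨(t i.castSucc).toNat, by
        have := hbox i.castSucc
        have := hlt i
        omega⟩ with hσf
      have hval : ∀ i : Fin k, ((σf i : ℕ) : ℤ) = t i.castSucc := by
        intro i
        simp only [hσf]
        exact Int.toNat_of_nonneg (hbox i.castSucc)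
      have hinjf : Function.Injective σf := by
        intro i j hh
        have : t i.castSucc = t j.castSucc := by
          rw [← hval i, ← hval j, hh]
        have := hinj (show min (t i.castSucc) (k:ℤ) = min (t j.castSucc) (k:ℤ) by rw [this])
        exact Fin.castSucc_injective k this
      have hbij := Finite.injective_iff_bijective.mp hinjf
      set σ₀ := Equiv.ofBijective σf hbij with hσ₀
      have happ : ∀ i, σ₀ i = σf i := fun i => rfl
      have hsum2 : (∑ i : Fin k, t i.castSucc) + t (Fin.last k)
          = (∑ i : Fin k, ((i : ℕ) : ℤ)) + k + s := by
        rw [← Fin.sum_univ_castSucc (f := t), hsum, sum_fin_succ_coe]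
      have hsum3 : (∑ i : Fin k, t i.castSucc) = ∑ i : Fin k, ((i : ℕ) : ℤ) := by
        rw [show (∑ i : Fin k, t i.castSucc) = ∑ i : Fin k, ((σf i : ℕ) : ℤ) by
              exact Finset.sum_congr rfl fun i _ => (hval i).symm]
        exact Equiv.sum_comp σ₀ (fun x : Fin k => ((x : ℕ) : ℤ))
      have hlastval : t (Fin.last k) = (k : ℤ) + s := by omega
      apply hnot σ₀
      funext i
      induction i using Fin.lastCases with
      | last =>
          rw [hlastval]
          show _ = (Fin.snoc _ _ : Fin (k+1) → ℤ) (Fin.last k)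
          rw [Fin.snoc_last]
      | cast i =>
          show t i.castSucc = (Fin.snoc _ _ : Fin (k+1) → ℤ) i.castSucc
          rw [Fin.snoc_castSucc, happ, hval]
    · -- last entry of the word is negative
      push_neg at hlast
      have hneg : av (Fin.last k) - ((Fin.last k : ℕ) : ℤ) + t (Fin.last k) < 0 := by
        rw [hav, Fin.val_last]
        omega
      rw [Wt, Hprod_eq_zero (List.mem_ofFn.mpr ⟨Fin.last k, rfl⟩) hneg, smul_zero]
  · obtain ⟨i, j, hmin, hij⟩ := Function.not_injective_iff.mp hinj
    rw [Dcoef_eq_zero_of_caps t hij hmin, zero_smul]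

lemma tgtv_injective (s : ℕ) : Function.Injective (tgtv (k := k) s) := by
  intro σ τ hh
  apply Equiv.ext
  intro i
  have h1 : tgtv s σ i.castSucc = tgtv s τ i.castSucc := by rw [hh]
  unfold tgtv at h1
  rw [Fin.snoc_castSucc, Fin.snoc_castSucc] at h1
  exact Fin.ext (by exact_mod_cast h1)

/-- Evaluation of the determinant-weighted sum over the shift-vector box. -/
lemma sum_T (s : ℕ) (av : Fin (k + 1) → ℤ) (hav : av (Fin.last k) = 0) :
    ∑ t ∈ (Fintype.piFinset fun _ : Fin (k + 1) => Finset.Icc (0 : ℤ) ((k : ℤ) + s)).filter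
        (fun t => ∑ i, t i = (∑ i : Fin (k + 1), ((i : ℕ) : ℤ)) + s),
      Dcoef t • Wt av t
    = ∑ σ₀ : Equiv.Perm (Fin k), ((Equiv.Perm.sign σ₀ : ℤˣ) : ℤ) • Wt av (tgtv s σ₀) := by
  rw [← Finset.sum_subset
      (show Finset.image (tgtv (k := k) s) Finset.univ ⊆ _ from ?_) (fun t ht hnt => ?_)]
  · rw [Finset.sum_image (fun σ _ τ _ h => tgtv_injective s h)]
    exact Finset.sum_congr rfl fun σ₀ _ => by rw [Dcoef_tgtv]
  · intro t ht
    obtain ⟨σ₀, _, rfl⟩ := Finset.mem_image.mp ht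
    rw [Finset.mem_filter]
    constructor
    · rw [Fintype.mem_piFinset]
      intro i
      rw [Finset.mem_Icc]
      induction i using Fin.lastCases with
      | last =>
          unfold tgtv
          rw [Fin.snoc_last]
          exact ⟨by positivity, le_rfl⟩
      | cast i =>
          unfold tgtv
          rw [Fin.snoc_castSucc]
          have : (σ₀ i : ℕ) < k := (σ₀ i).isLt
          omega
    · exact sum_tgtv s σ₀
  · refine per_t s av t hav ?_ ?_ ?_
    · intro i
      have := Fintype.mem_piFinset.mp (Finset.mem_filter.mp ht).1 i
      exact (Finset.mem_Icc.mp this).1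
    · exact (Finset.mem_filter.mp ht).2
    · intro σ₀ he
      exact hnt (Finset.mem_image.mpr ⟨σ₀, Finset.mem_univ _, he.symm⟩)

end RightPieriAux
namespace RightPieriAux
open Equiv Finset

variable {k : ℕ}

lemma SFin_shift (av : Fin (k + 1) → ℤ) (e : Fin (k + 1) → ℕ) :
    SFin (k + 1) (fun i => av i + (e i : ℕ)) =
      ∑ σ : Equiv.Perm (Fin (k + 1)), ((Equiv.Perm.sign σ : ℤˣ) : ℤ) •
        Wt av (fun i => ((σ i : ℕ) : ℤ) + (e i : ℕ)) := by
  unfold SFin Wt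
  refine Finset.sum_congr rfl fun σ _ => ?_
  congr 1
  refine congrArg Hprod (congrArg List.ofFn (funext fun i => ?_))
  ring

/-- Main middle identity: the Pieri sum over shift vectors equals the target sum. -/
lemma middle (s : ℕ) (av : Fin (k + 1) → ℤ) (hav : av (Fin.last k) = 0) :
    ∑ e ∈ Finset.Nat.antidiagonalTuple (k + 1) s, SFin (k + 1) (fun i => av i + (e i : ℕ))
    = ∑ σ₀ : Equiv.Perm (Fin k), ((Equiv.Perm.sign σ₀ : ℤˣ) : ℤ) • Wt av (tgtv s σ₀) := by
  rw [← sum_T s av hav]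
  set Tfin := (Fintype.piFinset fun _ : Fin (k + 1) => Finset.Icc (0 : ℤ) ((k : ℤ) + s)).filter
      (fun t => ∑ i, t i = (∑ i : Fin (k + 1), ((i : ℕ) : ℤ)) + s) with hTfin
  have step1 : ∑ e ∈ Finset.Nat.antidiagonalTuple (k + 1) s,
      SFin (k + 1) (fun i => av i + (e i : ℕ))
      = ∑ σ : Equiv.Perm (Fin (k + 1)), ∑ e ∈ Finset.Nat.antidiagonalTuple (k + 1) s,
        ((Equiv.Perm.sign σ : ℤˣ) : ℤ) • Wt av (fun i => ((σ i : ℕ) : ℤ) + (e i : ℕ)) := by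
    rw [Finset.sum_comm]
    exact Finset.sum_congr rfl fun e _ => SFin_shift av e
  rw [step1]
  have step2 : ∀ σ : Equiv.Perm (Fin (k + 1)),
      ∑ e ∈ Finset.Nat.antidiagonalTuple (k + 1) s,
        ((Equiv.Perm.sign σ : ℤˣ) : ℤ) • Wt av (fun i => ((σ i : ℕ) : ℤ) + (e i : ℕ))
      = ∑ t ∈ Tfin.filter (fun t => ∀ i, ((σ i : ℕ) : ℤ) ≤ t i),
        ((Equiv.Perm.sign σ : ℤˣ) : ℤ) • Wt av t := by
    intro σ
    refine Finset.sum_nbij' (fun e => (fun i => ((σ i : ℕ) : ℤ) + (e i : ℕ)))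
      (fun t => (fun i => (t i - ((σ i : ℕ) : ℤ)).toNat)) ?_ ?_ ?_ ?_ ?_
    · intro e he
      rw [Finset.Nat.mem_antidiagonalTuple] at he
      have hei : ∀ i, e i ≤ s := by
        intro i
        rw [← he]
        exact Finset.single_le_sum (f := fun i => e i) (fun _ _ => Nat.zero_le _)
          (Finset.mem_univ i)
      rw [Finset.mem_filter, hTfin, Finset.mem_filter, Fintype.mem_piFinset]
      refine ⟨⟨fun i => ?_, ?_⟩, fun i => le_add_of_nonneg_right (Int.natCast_nonneg _)⟩
      · rw [Finset.mem_Icc]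
        have h1 : (σ i : ℕ) ≤ k := Nat.lt_succ_iff.mp (σ i).isLt
        have h2 := hei i
        constructor
        · positivity
        · push_cast
          omega
      · rw [Finset.sum_add_distrib,
          Equiv.sum_comp σ (fun x : Fin (k + 1) => ((x : ℕ) : ℤ))]
        have hcast : ∑ i, ((e i : ℕ) : ℤ) = (s : ℤ) := by
          rw [← he]
          push_cast
          rfl
        rw [hcast]
    · intro t ht
      rw [Finset.mem_filter, hTfin, Finset.mem_filter] at ht
      obtain ⟨⟨_, hsum⟩, hdom⟩ := ht
      rw [Finset.Nat.mem_antidiagonalTuple]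
      have hv : ∀ i, (((t i - ((σ i : ℕ) : ℤ)).toNat : ℕ) : ℤ) = t i - ((σ i : ℕ) : ℤ) :=
        fun i => Int.toNat_of_nonneg (by have := hdom i; omega)
      have hc : ((∑ i, (t i - ((σ i : ℕ) : ℤ)).toNat : ℕ) : ℤ) = (s : ℤ) := by
        push_cast [hv]
        rw [Finset.sum_sub_distrib,
          Equiv.sum_comp σ (fun x : Fin (k + 1) => ((x : ℕ) : ℤ)), hsum]
        ring
      exact_mod_cast hc
    · intro e _
      funext i
      simp
    · intro t ht
      rw [Finset.mem_filter] at ht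
      funext i
      show ((σ i : ℕ) : ℤ) + ((t i - ((σ i : ℕ) : ℤ)).toNat : ℕ) = t i
      rw [Int.toNat_of_nonneg (by have := ht.2 i; omega)]
      ring
    · intro e _
      rfl
  rw [Finset.sum_congr rfl fun σ _ => step2 σ]
  rw [Finset.sum_comm' (t' := Tfin)
    (s' := fun t => Finset.univ.filter
      (fun σ : Equiv.Perm (Fin (k + 1)) => ∀ i, ((σ i : ℕ) : ℤ) ≤ t i))
    (fun σ t => by
      simp only [Finset.mem_filter, Finset.mem_univ, true_and]
      tauto)]
  refine Finset.sum_congr rfl fun t _ => ?_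
  rw [← Finset.sum_smul]
  rfl

end RightPieriAux
namespace RightPieriAux
open Equiv Finset

/-- `α` padded with one final `0`, as an integer vector. -/
def avα (α : List ℕ) : Fin (α.length + 1) → ℤ := Fin.snoc (fun i => (α.get i : ℤ)) 0

lemma avα_last (α : List ℕ) : avα α (Fin.last α.length) = 0 := by
  rw [avα, Fin.snoc_last]

lemma avα_castSucc (α : List ℕ) (i : Fin α.length) : avα α i.castSucc = (α.get i : ℤ) := by
  rw [avα, Fin.snoc_castSucc]

lemma Hprod_singleton (x : ℤ) : Hprod [x] = H x := by simp [Hprod]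

lemma lhs_eq (α : List ℕ) (s : ℕ) :
    ∑ σ₀ : Equiv.Perm (Fin α.length), ((Equiv.Perm.sign σ₀ : ℤˣ) : ℤ) •
      Wt (avα α) (tgtv s σ₀) = immaculate α * H (s : ℤ) := by
  rw [immaculate, Finset.sum_mul]
  refine Finset.sum_congr rfl fun σ₀ _ => ?_
  rw [smul_mul_assoc]
  congr 1
  rw [Wt, List.ofFn_succ', List.concat_eq_append, Hprod_append]
  congr 1
  · refine congrArg Hprod (congrArg List.ofFn (funext fun i => ?_))
    rw [avα_castSucc,
      show tgtv s σ₀ i.castSucc = ((σ₀ i : ℕ) : ℤ) from by rw [tgtv, Fin.snoc_castSucc]]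
    rw [Fin.coe_castSucc]
    ring
  · rw [Hprod_singleton, avα_last,
      show tgtv s σ₀ (Fin.last α.length) = ((α.length : ℤ) + s) from by
        rw [tgtv, Fin.snoc_last]]
    congr 1
    rw [Fin.val_last]
    ring

end RightPieriAux
namespace RightPieriAux
open Equiv Finset

/-- The composition `α ⊂_s β` determined by a shift vector `e`. -/
def betaOf (α : List ℕ) (e : Fin (α.length + 1) → ℕ) : List ℕ :=
  (List.ofFn fun i : Fin α.length => α.get i + e i.castSucc) ++
    (if e (Fin.last α.length) = 0 then [] else [e (Fin.last α.length)])

lemma betaOf_length (α : List ℕ) (e : Fin (α.length + 1) → ℕ) :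
    (betaOf α e).length = α.length + (if e (Fin.last α.length) = 0 then 0 else 1) := by
  rw [betaOf]
  split_ifs <;> simp

lemma betaOf_getD_lt (α : List ℕ) (e : Fin (α.length + 1) → ℕ) (j : ℕ) (hj : j < α.length) :
    (betaOf α e).getD j 0 = α.get ⟨j, hj⟩ + e (Fin.castSucc ⟨j, hj⟩) := by
  rw [betaOf, List.getD_eq_getElem _ _ (by simp; omega),
    List.getElem_append_left (by simpa using hj)]
  simp

lemma betaOf_getD_last (α : List ℕ) (e : Fin (α.length + 1) → ℕ)
    (h : e (Fin.last α.length) ≠ 0) :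
    (betaOf α e).getD α.length 0 = e (Fin.last α.length) := by
  rw [betaOf, List.getD_eq_getElem _ _ (by simp [h]),
    List.getElem_append_right (by simp)]
  simp [h]

lemma sum_eq_get (α : List ℕ) : α.sum = ∑ i, α.get i := by
  conv_lhs => rw [← List.ofFn_get α]
  rw [List.sum_ofFn]

lemma betaOf_sum (α : List ℕ) (e : Fin (α.length + 1) → ℕ) :
    (betaOf α e).sum = α.sum + ∑ i, e i := by
  rw [betaOf, List.sum_append, List.sum_ofFn, Finset.sum_add_distrib, ← sum_eq_get,
    Fin.sum_univ_castSucc (f := e)]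
  split_ifs with h
  · simp [h]
  · simp [add_assoc]

lemma immaculate_betaOf (α : List ℕ) (e : Fin (α.length + 1) → ℕ) :
    immaculate (betaOf α e) = SFin (α.length + 1) (fun i => avα α i + (e i : ℕ)) := by
  by_cases h0 : e (Fin.last α.length) = 0
  · have hb : betaOf α e = List.ofFn fun i : Fin α.length => α.get i + e i.castSucc := by
      rw [betaOf, h0]
      simp
    rw [hb, immaculate_eq_SFin]
    rw [SFin_congr List.length_ofFn _ (fun j => ((α.get j + e j.castSucc : ℕ) : ℤ))
      (fun i => by rw [List.get_ofFn])]
    rw [← SFin_snoc_zero (fun j : Fin α.length => ((α.get j + e j.castSucc : ℕ) : ℤ))]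
    refine SFin_congr rfl _ _ (fun i => ?_)
    induction i using Fin.lastCases with
    | last =>
        rw [Fin.cast_refl, id_eq]
        rw [Fin.snoc_last, avα_last, h0]
        simp
    | cast j =>
        rw [Fin.cast_refl, id_eq]
        rw [Fin.snoc_castSucc, avα_castSucc]
        push_cast
        ring
  · have hlen : (betaOf α e).length = α.length + 1 := by
      rw [betaOf_length]
      simp [h0]
    rw [immaculate_eq_SFin]
    refine SFin_congr hlen _ _ (fun i => ?_)
    by_cases hik : (i : ℕ) < α.length
    · have hcast : Fin.cast hlen i = Fin.castSucc ⟨(i : ℕ), hik⟩ := Fin.ext rfl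
      rw [hcast, avα_castSucc]
      rw [show (betaOf α e).get i = α.get ⟨(i : ℕ), hik⟩ + e (Fin.castSucc ⟨(i : ℕ), hik⟩) from by
        rw [List.get_eq_getElem, ← List.getD_eq_getElem _ 0 i.isLt,
          betaOf_getD_lt α e _ hik]]
      push_cast
      ring
    · have hik' : (i : ℕ) = α.length := by
        have h2 := i.isLt
        omega
      have hcast : Fin.cast hlen i = Fin.last α.length := Fin.ext (by simpa using hik')
      rw [hcast, avα_last]
      rw [show (betaOf α e).get i = e (Fin.last α.length) from by
        rw [List.get_eq_getElem, ← List.getD_eq_getElem _ 0 i.isLt, hik',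
          betaOf_getD_last α e h0]]
      simp

lemma betaOf_injective (α : List ℕ) : Function.Injective (betaOf α) := by
  intro e e' hh
  have hlen := congrArg List.length hh
  rw [betaOf_length, betaOf_length] at hlen
  have hiff : e (Fin.last α.length) = 0 ↔ e' (Fin.last α.length) = 0 := by
    by_cases h1 : e (Fin.last α.length) = 0 <;> by_cases h2 : e' (Fin.last α.length) = 0 <;>
      simp [h1, h2] at hlen ⊢
  have hcs : ∀ j : Fin α.length, e j.castSucc = e' j.castSucc := by
    intro j
    have h1 := betaOf_getD_lt α e (j : ℕ) j.isLt
    have h2 := betaOf_getD_lt α e' (j : ℕ) j.isLt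
    rw [hh] at h1
    rw [h1] at h2
    simp only [Fin.eta] at h2
    omega
  funext i
  induction i using Fin.lastCases with
  | last =>
      by_cases h1 : e (Fin.last α.length) = 0
      · rw [h1, (hiff.mp h1)]
      · have h2 : e' (Fin.last α.length) ≠ 0 := fun hc => h1 (hiff.mpr hc)
        have g1 := betaOf_getD_last α e h1
        have g2 := betaOf_getD_last α e' h2
        rw [hh] at g1
        rw [g1] at g2
        exact g2
  | cast j => exact hcs j

end RightPieriAux
namespace RightPieriAux
open Equiv Finset

lemma betaOf_mem (α : List ℕ) (hα : IsComposition α) (s : ℕ) (e : Fin (α.length + 1) → ℕ)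
    (he : ∑ i, e i = s) : IsComposition (betaOf α e) ∧ SubCompS s α (betaOf α e) := by
  refine ⟨?_, ?_, ?_, ?_⟩
  · intro x hx
    rw [betaOf] at hx
    rcases List.mem_append.mp hx with h | h
    · obtain ⟨i, hi⟩ := List.mem_ofFn.mp h
      have hi' : α.get i + e i.castSucc = x := hi
      have h2 := hα (α.get i) (by rw [List.get_eq_getElem]; exact List.getElem_mem _)
      omega
    · split_ifs at h with hc
      · simp at h
      · rw [List.mem_singleton] at h
        omega
  · rw [betaOf_sum, he]
  · intro j
    by_cases hj : j < α.length
    · rw [betaOf_getD_lt α e j hj]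
      have hα' : α.getD j 0 = α.get ⟨j, hj⟩ := by
        rw [List.getD_eq_getElem _ _ hj]
        rfl
      omega
    · rw [List.getD_eq_default _ _ (le_of_not_gt hj)]
      exact Nat.zero_le _
  · rw [betaOf_length]
    split_ifs <;> omega

lemma exists_betaOf (α : List ℕ) (hα : IsComposition α) (s : ℕ) (β : List ℕ)
    (hβ : IsComposition β ∧ SubCompS s α β) :
    ∃ e : Fin (α.length + 1) → ℕ, (∑ i, e i = s) ∧ betaOf α e = β := by
  obtain ⟨hβc, hsum, hdom, hlen⟩ := hβ
  have hklen : α.length ≤ β.length := by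
    by_contra hcon
    push_neg at hcon
    have h1 := hdom β.length
    rw [List.getD_eq_default β _ (le_refl β.length),
      List.getD_eq_getElem _ _ hcon] at h1
    have := hα (α[β.length]) (List.getElem_mem _)
    omega
  set e : Fin (α.length + 1) → ℕ := fun i =>
    if hc : (i : ℕ) < α.length then β.getD i 0 - α.getD i 0
    else (if β.length = α.length + 1 then β.getD α.length 0 else 0) with he_def
  have he_cs : ∀ (j : ℕ) (hj : j < α.length),
      e (Fin.castSucc ⟨j, hj⟩) = β.getD j 0 - α.getD j 0 := by
    intro j hj
    rw [he_def]
    simp [hj]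
  have he_last : e (Fin.last α.length)
      = if β.length = α.length + 1 then β.getD α.length 0 else 0 := by
    rw [he_def]
    simp
  have hgetlt : ∀ (j : ℕ) (hj : j < α.length),
      α.get ⟨j, hj⟩ + e (Fin.castSucc ⟨j, hj⟩) = β.getD j 0 := by
    intro j hj
    rw [he_cs j hj]
    have hα' : α.getD j 0 = α.get ⟨j, hj⟩ := by
      rw [List.getD_eq_getElem _ _ hj]
      rfl
    have := hdom j
    omega
  have hbb : betaOf α e = β := by
    rcases Nat.lt_or_ge β.length (α.length + 1) with hb | hb
    · -- β.length = α.length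
      have hb1 : β.length = α.length := by omega
      have hlast0 : e (Fin.last α.length) = 0 := by
        rw [he_last, if_neg (by omega)]
      apply List.ext_getElem
      · rw [betaOf_length, hlast0, if_pos rfl, hb1]
        omega
      · intro j h1 h2
        have hj : j < α.length := by
          have := betaOf_length α e
          rw [hlast0, if_pos rfl] at this
          omega
        rw [← List.getD_eq_getElem _ 0 h1, ← List.getD_eq_getElem _ 0 h2,
          betaOf_getD_lt α e j hj, hgetlt j hj]
    · have hb2 : β.length = α.length + 1 := by omega
      have hlastv : e (Fin.last α.length) = β.getD α.length 0 := by
        rw [he_last, if_pos hb2]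
      have hlastne : e (Fin.last α.length) ≠ 0 := by
        rw [hlastv, List.getD_eq_getElem _ _ (by omega)]
        have := hβc (β[α.length]) (List.getElem_mem _)
        omega
      apply List.ext_getElem
      · rw [betaOf_length, if_neg hlastne, hb2]
      · intro j h1 h2
        rcases Nat.lt_or_ge j α.length with hj | hj
        · rw [← List.getD_eq_getElem _ 0 h1, ← List.getD_eq_getElem _ 0 h2,
            betaOf_getD_lt α e j hj, hgetlt j hj]
        · have hj2 : j = α.length := by
            rw [betaOf_length, if_neg hlastne] at h1
            omega
          subst hj2
          rw [← List.getD_eq_getElem _ 0 h1, ← List.getD_eq_getElem _ 0 h2,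
            betaOf_getD_last α e hlastne, hlastv]
  refine ⟨e, ?_, hbb⟩
  have := betaOf_sum α e
  rw [hbb, hsum] at this
  omega

end RightPieriAux
/-- right Pieri rule: `𝔖_α · H_s = Σ_{α ⊂_s β} 𝔖_β`. -/
theorem right_pieri (α : List ℕ) (hα : IsComposition α) (s : ℕ) (hs : 0 < s) :
    immaculate α * H (s : ℤ) =
      ∑ᶠ (β : List ℕ) (_ : IsComposition β ∧ SubCompS s α β), immaculate β := by
  classical
  open RightPieriAux in
  have hset : {β : List ℕ | IsComposition β ∧ SubCompS s α β}
      = (((Finset.Nat.antidiagonalTuple (α.length + 1) s).image (betaOf α) : Finset (List ℕ))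
          : Set (List ℕ)) := by
    ext β
    simp only [Set.mem_setOf_eq, Finset.coe_image, Set.mem_image, Finset.mem_coe,
      Finset.Nat.mem_antidiagonalTuple]
    constructor
    · intro hβ
      obtain ⟨e, he, rfl⟩ := exists_betaOf α hα s β hβ
      exact ⟨e, he, rfl⟩
    · rintro ⟨e, he, rfl⟩
      exact betaOf_mem α hα s e he
  have h1 : ∑ᶠ (β : List ℕ) (_ : IsComposition β ∧ SubCompS s α β), immaculate β
      = ∑ β ∈ (Finset.Nat.antidiagonalTuple (α.length + 1) s).image (betaOf α), immaculate β := by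
    rw [← finsum_mem_coe_finset, ← hset]
    rfl
  rw [h1, Finset.sum_image (fun e _ e' _ h => betaOf_injective α h),
    Finset.sum_congr rfl (fun e _ => immaculate_betaOf α e),
    middle s (avα α) (avα_last α), lhs_eq]
end
end

section
/- (Translation invariance) Let α, β, γ be compositions and v an integer vector of nonnegative entries with ℓ(v) ≤ ℓ(α). Write 𝔖_α 𝔖_β = Σ_γ C_{α,β}^γ 𝔖_γ for the structure constants of the immaculate basis. Then C_{α,β}^γ = C_{α+v, β}^{γ+v}, where α+v and γ+v denote entrywise addition (padding v with zeros). -/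
open scoped BigOperators

noncomputable section

namespace TI
open Equiv List Finset
@[simp] lemma Hprod_nil : Hprod [] = 1 := rfl
@[simp] lemma Hprod_cons (a : ℤ) (l : List ℤ) : Hprod (a :: l) = H a * Hprod l := by
  simp [Hprod]
lemma Hprod_append (l₁ l₂ : List ℤ) : Hprod (l₁ ++ l₂) = Hprod l₁ * Hprod l₂ := by
  simp [Hprod]
@[simp] lemma H_neg {a : ℤ} (h : a < 0) : H a = 0 := by simp [H, h]
@[simp] lemma H_zero : H 0 = 1 := by simp [H]
lemma H_pos {a : ℤ} (h : 0 < a) : H a = FreeAlgebra.ι ℚ a.toNat := by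
  simp [H, h.not_gt, h.ne']
lemma Hprod_eq_zero {l : List ℤ} (h : ∃ a ∈ l, a < 0) : Hprod l = 0 := by
  obtain ⟨a, ha, hneg⟩ := h
  exact List.prod_eq_zero (by simpa using ⟨a, ha, H_neg hneg⟩)

noncomputable def E : NSym ≃ₐ[ℚ] MonoidAlgebra ℚ (FreeMonoid ℕ) :=
  FreeAlgebra.equivMonoidAlgebraFreeMonoid

lemma E_iota (n : ℕ) : E (FreeAlgebra.ι ℚ n) =
    MonoidAlgebra.single (FreeMonoid.of n) 1 := by
  simp [E, FreeAlgebra.equivMonoidAlgebraFreeMonoid, MonoidAlgebra.of_apply]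

def cleanup (l : List ℤ) : List ℕ := (l.filter (fun a => 0 < a)).map Int.toNat

lemma E_Hprod (l : List ℤ) : E (Hprod l) =
    if ∀ a ∈ l, 0 ≤ a then MonoidAlgebra.single (FreeMonoid.ofList (cleanup l)) 1 else 0 := by
  induction l with
  | nil =>
    rw [Hprod_nil, map_one, if_pos (by simp)]
    simp [cleanup, MonoidAlgebra.one_def]
  | cons a l ih =>
    rcases lt_trichotomy a 0 with h | h | h
    · simp [H_neg h, map_mul, h.not_ge]
    · subst h
      have hc : cleanup (0 :: l) = cleanup l := by simp [cleanup]
      simp only [Hprod_cons, H_zero, one_mul, ih, hc]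
      congr 1
      simp
    · have hc : cleanup (a :: l) = a.toNat :: cleanup l := by simp [cleanup, h]
      simp only [Hprod_cons, H_pos h, map_mul, E_iota, ih, hc]
      by_cases hl : ∀ x ∈ l, 0 ≤ x
      · have hal : ∀ x ∈ a :: l, (0:ℤ) ≤ x := by
          intro x hx; rcases List.mem_cons.1 hx with rfl | hx; exacts [h.le, hl x hx]
        rw [if_pos hl, if_pos hal, MonoidAlgebra.single_mul_single, one_mul]
        rfl
      · have hal : ¬ ∀ x ∈ a :: l, (0:ℤ) ≤ x := by
          intro hcon; exact hl fun x hx => hcon x (List.mem_cons_of_mem _ hx)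
        rw [if_neg hl, if_neg hal, mul_zero]

noncomputable def coeffL (u : List ℕ) : NSym →ₗ[ℚ] ℚ :=
  ((Finsupp.lapply (FreeMonoid.ofList u)).comp
    (MonoidAlgebra.coeffLinearEquiv (R := ℚ)).toLinearMap).comp E.toLinearMap

lemma coeffL_Hprod (u : List ℕ) (l : List ℤ) :
    coeffL u (Hprod l) = if (∀ a ∈ l, 0 ≤ a) ∧ cleanup l = u then 1 else 0 := by
  have h0 : coeffL u (Hprod l) = (E (Hprod l)).coeff (FreeMonoid.ofList u) := rfl
  rw [h0, E_Hprod]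
  by_cases h : ∀ a ∈ l, 0 ≤ a
  · rw [if_pos h]
    by_cases h2 : cleanup l = u
    · rw [if_pos ⟨h, h2⟩, h2]
      exact Finsupp.single_eq_same
    · rw [if_neg (by tauto)]
      exact Finsupp.single_eq_of_ne (fun hcon => h2 (FreeMonoid.ofList.injective hcon.symm))
  · rw [if_neg h, if_neg (by tauto)]
    rfl

def ncoe : ℕ → ℤ := fun x => (x : ℤ)
lemma ncoe_inj : Function.Injective ncoe := fun a b h => by
  simp only [ncoe] at h; exact_mod_cast h
@[simp] lemma ncoe_apply (x : ℕ) : ncoe x = (x : ℤ) := rfl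

lemma cleanup_length (l : List ℤ) : (cleanup l).length ≤ l.length := by
  simpa [cleanup] using List.length_filter_le _ l

lemma cleanup_full : ∀ (l : List ℤ) (u : List ℕ), (∀ a ∈ l, 0 ≤ a) → cleanup l = u →
    l.length ≤ u.length → l = u.map ncoe
  | [], u, _, hcl, hlen => by
      have : u = [] := by simpa [cleanup] using hcl.symm ▸ (by simp [cleanup] : cleanup [] = [])
      simp [this]
  | a :: l, u, hpos, hcl, hlen => by
      have ha : 0 ≤ a := hpos a List.mem_cons_self
      rcases ha.lt_or_eq with h | h
      · have hc : cleanup (a :: l) = a.toNat :: cleanup l := by simp [cleanup, h]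
        rw [hc] at hcl
        rcases u with _ | ⟨b, u⟩
        · exact absurd hcl (by simp)
        · simp only [List.cons.injEq] at hcl
          have := cleanup_full l u (fun x hx => hpos x (List.mem_cons_of_mem _ hx)) hcl.2
            (by simpa using hlen)
          simp [← hcl.1, this, Int.toNat_of_nonneg ha]
      · exfalso
        have hc : cleanup (a :: l) = cleanup l := by simp [cleanup, ← h]
        rw [hc] at hcl
        have := cleanup_length l
        rw [hcl] at this
        simp at hlen
        omega

def wd (δ : List ℕ) (σ : Equiv.Perm (Fin δ.length)) : List ℤ :=
  List.ofFn fun i => ((δ.get i : ℤ) + ((σ i : ℕ) : ℤ) - ((i : ℕ) : ℤ))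

lemma immaculate_def' (δ : List ℕ) :
    immaculate δ = ∑ σ : Equiv.Perm (Fin δ.length), ((Equiv.Perm.sign σ : ℤ)) • Hprod (wd δ σ) := rfl

lemma wd_length (δ : List ℕ) (σ : Equiv.Perm (Fin δ.length)) : (wd δ σ).length = δ.length := by
  simp [wd]

lemma coeffL_immaculate (u δ : List ℕ) :
    coeffL u (immaculate δ) = ∑ σ : Equiv.Perm (Fin δ.length),
      (Equiv.Perm.sign σ : ℤ) •
        (if (∀ a ∈ wd δ σ, 0 ≤ a) ∧ cleanup (wd δ σ) = u then (1:ℚ) else 0) := by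
  rw [immaculate_def', map_sum]
  refine Finset.sum_congr rfl fun σ _ => ?_
  rw [map_zsmul, coeffL_Hprod]

lemma wd_one {δ : List ℕ} : wd δ 1 = δ.map ncoe := by
  have h2 : δ.map ncoe = List.ofFn (fun i : Fin δ.length => (δ.get i : ℤ)) := by
    conv_lhs => rw [← List.ofFn_get δ]
    rw [List.map_ofFn]
    rfl
  rw [h2, wd]
  congr 1
  funext i
  simp

lemma cleanup_map_coe {γ : List ℕ} (hγ : IsComposition γ) :
    cleanup (γ.map ncoe) = γ := by
  unfold cleanup
  rw [List.filter_map]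
  have h3 : List.filter ((fun a => decide (0 < a)) ∘ ncoe) γ = γ := by
    rw [List.filter_eq_self]
    intro a ha
    simpa using hγ a ha
  rw [h3, List.map_map]
  have h4 : (Int.toNat ∘ ncoe) = id := by funext x; simp
  rw [h4, List.map_id]

lemma wd_entry {δ u : List ℕ} {σ : Equiv.Perm (Fin δ.length)}
    (heq : wd δ σ = u.map ncoe) (i : Fin δ.length) :
    (u.getD i 0 : ℤ) = (δ.get i : ℤ) + ((σ i : ℕ) : ℤ) - (i : ℕ) := by
  have hul : u.length = δ.length := by
    have := congrArg List.length heq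
    simp only [wd, List.length_ofFn, List.length_map] at this
    omega
  have h1 : (wd δ σ)[(i:ℕ)]? = some ((δ.get i : ℤ) + ((σ i : ℕ):ℤ) - (i:ℕ)) := by
    simp [wd]
  rw [heq] at h1
  rw [List.getElem?_map] at h1
  have hiu : (i : ℕ) < u.length := by rw [hul]; exact i.isLt
  rw [List.getElem?_eq_getElem hiu] at h1
  have h2 : ncoe (u[(i:ℕ)]'hiu) = (δ.get i : ℤ) + ((σ i : ℕ):ℤ) - (i:ℕ) :=
    Option.some_inj.mp (by simpa using h1)
  rw [List.getD_eq_getElem u 0 hiu]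
  simpa using h2

lemma lex_aux : ∀ (i : ℕ) (xs ys : List ℕ), i < xs.length → i < ys.length →
    (∀ j, j < i → xs.getD j 0 = ys.getD j 0) → xs.getD i 0 < ys.getD i 0 →
    List.Lex (·<·) xs ys
  | 0, [], ys, h1, _, _, _ => absurd h1 (by simp)
  | 0, xs, [], _, h2, _, _ => absurd h2 (by simp)
  | 0, x :: xs, y :: ys, _, _, _, hlt => List.Lex.rel (by simpa using hlt)
  | (i+1), [], ys, h1, _, _, _ => absurd h1 (by simp)
  | (i+1), xs, [], _, h2, _, _ => absurd h2 (by simp)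
  | (i+1), x :: xs, y :: ys, h1, h2, hpre, hlt => by
      have hx : x = y := by have := hpre 0 (Nat.succ_pos _); simpa using this
      subst hx
      exact List.Lex.cons (lex_aux i xs ys (by simpa using h1) (by simpa using h2)
        (fun j hj => by simpa using hpre (j+1) (by omega)) (by simpa using hlt))

lemma coeffL_immaculate_self {γ : List ℕ} (hγ : IsComposition γ) :
    coeffL γ (immaculate γ) = 1 := by
  rw [coeffL_immaculate]
  have key : ∀ σ : Equiv.Perm (Fin γ.length),
      (Equiv.Perm.sign σ : ℤ) •
        (if (∀ a ∈ wd γ σ, 0 ≤ a) ∧ cleanup (wd γ σ) = γ then (1:ℚ) else 0)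
      = if σ = 1 then 1 else 0 := by
    intro σ
    by_cases hσ : σ = 1
    · subst hσ
      rw [if_pos rfl, if_pos, map_one]
      · norm_num
      · constructor
        · rw [wd_one]; intro a ha
          simp only [List.mem_map] at ha
          obtain ⟨x, _, rfl⟩ := ha
          exact Int.ofNat_nonneg x
        · rw [wd_one, cleanup_map_coe hγ]
    · rw [if_neg hσ, if_neg, smul_zero]
      rintro ⟨h1, h2⟩
      apply hσ
      have heq : wd γ σ = γ.map ncoe :=
        cleanup_full _ _ h1 h2 (by rw [wd_length])
      ext i : 1
      have h5 := wd_entry heq i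
      have hget : γ.getD (i:ℕ) 0 = γ.get i := by
        rw [List.getD_eq_getElem γ 0 i.isLt]
        rfl
      rw [hget] at h5
      have h6 : ((σ i : ℕ) : ℤ) = ((i : ℕ) : ℤ) := by omega
      exact Fin.ext (by exact_mod_cast h6)
  rw [Finset.sum_congr rfl (fun σ _ => key σ), Finset.sum_ite_eq' Finset.univ 1 (fun _ => (1:ℚ))]
  simp

lemma coeffL_immaculate_vanish {δ u : List ℕ} (hδ : IsComposition δ)
    (hlen : δ.length ≤ u.length) (hne : δ ≠ u) (hnlex : ¬ List.Lex (·<·) δ u) :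
    coeffL u (immaculate δ) = 0 := by
  rw [coeffL_immaculate]
  refine Finset.sum_eq_zero fun σ _ => ?_
  rw [if_neg, smul_zero]
  rintro ⟨h1, h2⟩
  -- lengths
  have hcl : u.length ≤ δ.length := by
    have := cleanup_length (wd δ σ)
    rw [h2, wd_length] at this
    exact this
  have hul : u.length = δ.length := le_antisymm hcl hlen
  have heq : wd δ σ = u.map ncoe :=
    cleanup_full _ _ h1 h2 (by rw [wd_length, hul])
  by_cases hσ : σ = 1
  · subst hσ
    rw [wd_one] at heq
    exact hne (List.map_injective_iff.2 ncoe_inj heq)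
  · -- build lex
    apply hnlex
    have hne1 : (Finset.univ.filter (fun i : Fin δ.length => σ i ≠ i)).Nonempty := by
      rw [Finset.filter_nonempty_iff]
      by_contra hcon
      push_neg at hcon
      exact hσ (Equiv.ext fun i => hcon i (Finset.mem_univ i))
    set i0 := (Finset.univ.filter (fun i : Fin δ.length => σ i ≠ i)).min' hne1 with hi0
    have hi0mem : σ i0 ≠ i0 := by
      have := Finset.min'_mem _ hne1
      rw [Finset.mem_filter] at this
      exact this.2
    have hfix : ∀ j : Fin δ.length, j < i0 → σ j = j := by
      intro j hj
      by_contra hcon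
      have hle : i0 ≤ j := by
        rw [hi0]
        exact Finset.min'_le _ j (Finset.mem_filter.2 ⟨Finset.mem_univ _, hcon⟩)
      exact absurd hj (not_lt.2 hle)
    have hgt : (i0 : ℕ) < (σ i0 : ℕ) := by
      rcases lt_trichotomy (σ i0) i0 with h | h | h
      · exfalso
        have hfix2 : σ (σ i0) = σ i0 := hfix _ h
        exact hi0mem (σ.injective hfix2)
      · exact absurd h hi0mem
      · exact h
    refine lex_aux (i0 : ℕ) δ u i0.isLt (by omega) ?_ ?_
    · intro j hj
      have hjlt : j < δ.length := lt_trans hj i0.isLt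
      have h7 := wd_entry heq ⟨j, hjlt⟩
      rw [hfix ⟨j, hjlt⟩ (by exact hj)] at h7
      have hget : δ.getD j 0 = δ.get ⟨j, hjlt⟩ := by
        rw [List.getD_eq_getElem δ 0 hjlt]; rfl
      simp only [Fin.val_mk] at h7
      simp only [hget]
      omega
    · have h8 := wd_entry heq i0
      have hget : δ.getD (i0:ℕ) 0 = δ.get i0 := by
        rw [List.getD_eq_getElem δ 0 i0.isLt]; rfl
      rw [hget]
      omega

lemma coeffL_immaculate_vanish_len {δ u : List ℕ} (hlen : δ.length < u.length) :
    coeffL u (immaculate δ) = 0 := by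
  rw [coeffL_immaculate]
  refine Finset.sum_eq_zero fun σ _ => ?_
  rw [if_neg, smul_zero]
  rintro ⟨h1, h2⟩
  have := cleanup_length (wd δ σ)
  rw [h2, wd_length] at this
  omega

lemma list_not_lt {a b : List ℕ} (h : b ≤ a) : ¬ List.Lex (·<·) a b := by
  intro hcon
  exact absurd hcon (not_lt.2 h : ¬ a < b)

lemma expansion_zero {d : List ℕ →₀ ℚ} (hs : ∀ γ ∈ d.support, IsComposition γ)
    (h : Finsupp.linearCombination ℚ immaculate d = 0) : d = 0 := by
  by_contra hd
  have hne : d.support.Nonempty := Finsupp.support_nonempty_iff.2 hd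
  obtain ⟨γmax, hmem, hmax⟩ := Finset.exists_max_image d.support (fun l => l.length) hne
  set S' := d.support.filter (fun l => l.length = γmax.length) with hS'def
  have hS' : S'.Nonempty := ⟨γmax, by simp [hS'def, hmem]⟩
  set γ0 := S'.min' hS' with hγ0def
  have hγ0S : γ0 ∈ S' := Finset.min'_mem _ _
  have hγ0mem : γ0 ∈ d.support := (Finset.mem_filter.1 hγ0S).1
  have hγ0len : γ0.length = γmax.length := (Finset.mem_filter.1 hγ0S).2
  have hkey : coeffL γ0 (Finsupp.linearCombination ℚ immaculate d) = d γ0 := by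
    rw [Finsupp.linearCombination_apply, Finsupp.sum, map_sum]
    have hterm : ∀ δ ∈ d.support, coeffL γ0 (d δ • immaculate δ) =
        d δ * coeffL γ0 (immaculate δ) := by
      intro δ _
      rw [map_smul, smul_eq_mul]
    rw [Finset.sum_congr rfl hterm]
    rw [Finset.sum_eq_single γ0]
    · rw [coeffL_immaculate_self (hs γ0 hγ0mem), mul_one]
    · intro δ hδmem hδne
      have hδlen : δ.length ≤ γmax.length := hmax δ hδmem
      rcases lt_or_eq_of_le hδlen with hlt | heq
      · rw [coeffL_immaculate_vanish_len (by omega), mul_zero]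
      · rw [coeffL_immaculate_vanish (hs δ hδmem) (by omega) hδne, mul_zero]
        apply list_not_lt
        rw [hγ0def]
        exact Finset.min'_le _ δ (Finset.mem_filter.2 ⟨hδmem, heq⟩)
    · intro hcon
      exact absurd hγ0mem hcon
  rw [h, map_zero] at hkey
  exact absurd hkey.symm (Finsupp.mem_support_iff.1 hγ0mem)

lemma isExpansion_iff (f : NSym) (c : List ℕ →₀ ℚ) :
    IsExpansion f c ↔ (∀ γ ∈ c.support, IsComposition γ) ∧
      f = Finsupp.linearCombination ℚ immaculate c := by
  rw [IsExpansion, Finsupp.linearCombination_apply]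

lemma expansions_eq {f : NSym} {c c' : List ℕ →₀ ℚ}
    (h : IsExpansion f c) (h' : IsExpansion f c') : c = c' := by
  rw [isExpansion_iff] at h h'
  have hsub : Finsupp.linearCombination ℚ immaculate (c - c') = 0 := by
    rw [map_sub, ← h.2, ← h'.2, sub_self]
  have hsupp : ∀ γ ∈ (c - c').support, IsComposition γ := by
    intro γ hγ
    rcases Finset.mem_union.1 (Finsupp.support_sub hγ) with hmem | hmem
    exacts [h.1 γ hmem, h'.1 γ hmem]
  have := expansion_zero hsupp hsub
  exact sub_eq_zero.1 this

lemma padAdd_length (α v : List ℕ) : (padAdd α v).length = α.length := by simp [padAdd]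

lemma padAdd_injective (v : List ℕ) : Function.Injective (fun γ => padAdd γ v) := by
  intro a b h
  simp only at h
  have hlen : a.length = b.length := by
    have := congrArg List.length h
    simpa [padAdd_length] using this
  apply List.ext_getElem hlen
  intro n h1 h2
  have := congrArg (fun l => l.getD n 0) h
  simp only [padAdd] at this
  rw [List.getD_eq_getElem _ 0 (by simpa using h1), List.getD_eq_getElem _ 0 (by simpa [padAdd] using h2)] at this
  simp only [List.getElem_ofFn] at this
  simpa using this

lemma padAdd_ofFn {k : ℕ} (g : Fin k → ℕ) (v : List ℕ) :
    padAdd (List.ofFn g) v = List.ofFn (fun i : Fin k => g i + v.getD i 0) := by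
  apply List.ext_getElem (by simp [padAdd])
  intro n h1 h2
  simp [padAdd, List.getElem_ofFn]

lemma padAdd_isComposition {γ : List ℕ} (hγ : IsComposition γ) (v : List ℕ) :
    IsComposition (padAdd γ v) := by
  intro x hx
  rw [padAdd, List.mem_ofFn] at hx
  obtain ⟨i, rfl⟩ := hx
  have h2 : 0 < γ.get i := hγ (γ.get i) (List.get_mem γ i)
  exact Nat.lt_of_lt_of_le h2 (Nat.le_add_right _ _)

section Pieri
variable (k : ℕ)

def BSet (g : Fin k → ℕ) (s : ℤ) : Finset (Fin (k+1) → ℕ) :=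
  (Fintype.piFinset fun _ => Finset.range ((∑ i, g i) + s.toNat + 1)).filter
    (fun b => (∀ i : Fin k, g i ≤ b i.castSucc) ∧ (∑ i, (b i : ℤ)) = (∑ i, (g i : ℤ)) + s)

lemma mem_BSet {g : Fin k → ℕ} {s : ℤ} {b : Fin (k+1) → ℕ} :
    b ∈ BSet k g s ↔ (∀ i : Fin k, g i ≤ b i.castSucc) ∧
      (∑ i, (b i : ℤ)) = (∑ i, (g i : ℤ)) + s := by
  rw [BSet, Finset.mem_filter]
  constructor
  · exact fun h => h.2
  · rintro ⟨h1, h2⟩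
    refine ⟨Fintype.mem_piFinset.2 fun i => Finset.mem_range.2 ?_, h1, h2⟩
    have hle : (b i : ℤ) ≤ ∑ j, (b j : ℤ) :=
      Finset.single_le_sum (fun j _ => Int.ofNat_nonneg (b j)) (Finset.mem_univ i)
    have h3 : (∑ j, (g j : ℤ)) = ((∑ j, g j : ℕ) : ℤ) := (Nat.cast_sum _ _).symm
    have h4 : s ≤ (s.toNat : ℤ) := Int.self_le_toNat s
    rw [h2, h3] at hle
    omega

def toComp (b : Fin (k+1) → ℕ) : List ℕ :=
  if b (Fin.last k) = 0 then List.ofFn (fun i : Fin k => b i.castSucc) else List.ofFn b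

lemma toComp_length (b : Fin (k+1) → ℕ) : k ≤ (toComp k b).length := by
  unfold toComp
  split <;> simp

lemma toComp_isComposition {g : Fin k → ℕ} {s : ℤ} {b : Fin (k+1) → ℕ}
    (hg : ∀ i, 0 < g i) (hb : b ∈ BSet k g s) : IsComposition (toComp k b) := by
  have hpos : ∀ i : Fin k, 0 < b i.castSucc :=
    fun i => lt_of_lt_of_le (hg i) (((mem_BSet k).1 hb).1 i)
  intro x hx
  unfold toComp at hx
  split at hx
  · rw [List.mem_ofFn] at hx
    obtain ⟨i, rfl⟩ := hx
    exact hpos i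
  · rw [List.mem_ofFn] at hx
    obtain ⟨i, rfl⟩ := hx
    induction i using Fin.lastCases with
    | last => exact Nat.pos_of_ne_zero (by assumption)
    | cast j => exact hpos j

def wrd (b : Fin (k+1) → ℕ) (σ : Equiv.Perm (Fin (k+1))) : Fin (k+1) → ℤ :=
  fun i => ((b i : ℤ) + ((σ i : ℕ) : ℤ) - ((i : ℕ) : ℤ))

noncomputable def trm (b : Fin (k+1) → ℕ) (σ : Equiv.Perm (Fin (k+1))) : NSym :=
  ((Equiv.Perm.sign σ : ℤ)) • Hprod (List.ofFn (wrd k b σ))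

lemma immaculate_ofFn {m : ℕ} (g : Fin m → ℕ) :
    immaculate (List.ofFn g) = ∑ σ : Equiv.Perm (Fin m),
      ((Equiv.Perm.sign σ : ℤ)) •
        Hprod (List.ofFn fun i => ((g i : ℤ) + ((σ i : ℕ) : ℤ) - ((i : ℕ) : ℤ))) := by
  rw [immaculate]
  have hlen : (List.ofFn g).length = m := List.length_ofFn
  refine Fintype.sum_equiv ((finCongr hlen).permCongr) _ _ ?_
  intro σ
  congr 1
  · rw [Equiv.Perm.sign_permCongr]
  · congr 1
    apply List.ext_getElem (by simp)
    intro n h1 h2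
    simp [List.getElem_ofFn, List.get_ofFn, Equiv.permCongr_apply]

def lastSubtype : Fin k ≃ {i : Fin (k+1) // (i : ℕ) < k} where
  toFun i := ⟨i.castSucc, by simp⟩
  invFun j := ⟨(j.1 : ℕ), j.2⟩
  left_inv := by intro i; simp [Fin.ext_iff]
  right_inv := by intro j; simp [Fin.ext_iff]

def extP (τ : Equiv.Perm (Fin k)) : Equiv.Perm (Fin (k+1)) :=
  τ.extendDomain (lastSubtype k)

lemma extP_castSucc (τ : Equiv.Perm (Fin k)) (i : Fin k) :
    extP k τ i.castSucc = (τ i).castSucc := by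
  have := Equiv.Perm.extendDomain_apply_image τ (lastSubtype k) i
  simpa [extP, lastSubtype] using this

lemma extP_last (τ : Equiv.Perm (Fin k)) : extP k τ (Fin.last k) = Fin.last k :=
  Equiv.Perm.extendDomain_apply_not_subtype _ _ (by simp)

lemma sign_extP (τ : Equiv.Perm (Fin k)) :
    Equiv.Perm.sign (extP k τ) = Equiv.Perm.sign τ :=
  Equiv.Perm.sign_extendDomain _ _

lemma sum_fix_last {M : Type*} [AddCommMonoid M] (F : Equiv.Perm (Fin (k+1)) → M) :
    ∑ σ ∈ Finset.univ.filter (fun σ : Equiv.Perm (Fin (k+1)) => σ (Fin.last k) = Fin.last k),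
      F σ = ∑ τ : Equiv.Perm (Fin k), F (extP k τ) := by
  refine (Finset.sum_bij' (fun (τ : Equiv.Perm (Fin k)) _ => extP k τ)
    (fun σ hσ => ?resdef) ?_ ?_ ?_ ?_ ?_).symm
  case resdef =>
    have hfix : σ (Fin.last k) = Fin.last k := (Finset.mem_filter.1 hσ).2
    have hiff : ∀ i : Fin (k+1), ((i : ℕ) < k ↔ ((σ i : Fin (k+1)) : ℕ) < k) := by
      intro i
      have hlast : ∀ x : Fin (k+1), ((x : ℕ) < k ↔ x ≠ Fin.last k) := by
        intro x
        constructor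
        · intro h hx
          rw [hx] at h
          simp at h
        · intro h
          have := x.isLt
          rcases Nat.lt_or_ge (x : ℕ) k with h' | h'
          · exact h'
          · exact absurd (Fin.ext (by omega : (x:ℕ) = k)) h
      rw [hlast, hlast]
      constructor
      · intro h hcon
        exact h (σ.injective (hcon.trans hfix.symm))
      · intro h hcon
        rw [hcon] at h
        exact h hfix
    exact ((lastSubtype k).symm.permCongr) (σ.subtypePerm (fun i => (hiff i).symm))
  · intro τ _
    exact Finset.mem_filter.2 ⟨Finset.mem_univ _, extP_last k τ⟩
  · intro σ hσ
    exact Finset.mem_univ _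
  · intro τ _
    apply Equiv.ext
    intro i
    apply Fin.ext
    show (((extP k τ) (((lastSubtype k) i : Fin (k+1)))) : ℕ) = ((τ i : Fin k) : ℕ)
    rw [show ((lastSubtype k) i : Fin (k+1)) = i.castSucc from rfl, extP_castSucc]
    simp
  · intro σ hσ
    have hfix : σ (Fin.last k) = Fin.last k := (Finset.mem_filter.1 hσ).2
    show extP k _ = σ
    apply Equiv.ext
    intro x
    induction x using Fin.lastCases with
    | last => rw [extP_last, hfix]
    | cast i =>
      rw [extP_castSucc]
      apply Fin.ext
      show ((σ ((lastSubtype k i : Fin (k+1)))) : ℕ) = ((σ i.castSucc) : ℕ)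
      rfl
  · intro τ _
    rfl

lemma immaculate_toComp (b : Fin (k+1) → ℕ) (hpos : ∀ i : Fin k, 0 < b i.castSucc) :
    immaculate (toComp k b) = ∑ σ : Equiv.Perm (Fin (k+1)), trm k b σ := by
  by_cases h : b (Fin.last k) = 0
  · rw [toComp, if_pos h, immaculate_ofFn]
    rw [← Finset.sum_filter_add_sum_filter_not Finset.univ
      (fun σ : Equiv.Perm (Fin (k+1)) => σ (Fin.last k) = Fin.last k) (trm k b)]
    have hzero : ∑ σ ∈ Finset.univ.filter
        (fun σ : Equiv.Perm (Fin (k+1)) => ¬ σ (Fin.last k) = Fin.last k), trm k b σ = 0 := by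
      refine Finset.sum_eq_zero fun σ hσ => ?_
      have hne : σ (Fin.last k) ≠ Fin.last k := (Finset.mem_filter.1 hσ).2
      have hlt : ((σ (Fin.last k) : Fin (k+1)) : ℕ) < k := by
        have h1 := (σ (Fin.last k)).isLt
        have h2 : ((σ (Fin.last k) : Fin (k+1)) : ℕ) ≠ k := by
          intro hcon
          exact hne (Fin.ext (by simpa using hcon))
        omega
      have hword : wrd k b σ (Fin.last k) < 0 := by
        unfold wrd
        rw [h]
        simp only [Fin.val_last]
        push_cast
        omega
      unfold trm
      rw [Hprod_eq_zero ⟨wrd k b σ (Fin.last k), by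
        rw [List.mem_ofFn]; exact ⟨Fin.last k, rfl⟩, hword⟩, smul_zero]
    rw [hzero, add_zero, sum_fix_last]
    refine Finset.sum_congr rfl fun τ _ => ?_
    unfold trm
    rw [sign_extP]
    congr 1
    have hlist : List.ofFn (wrd k b (extP k τ))
        = (List.ofFn fun i : Fin k => ((b i.castSucc : ℤ) + ((τ i : ℕ) : ℤ) - ((i : ℕ) : ℤ))).concat
          ((0 : ℤ)) := by
      rw [List.ofFn_succ' (wrd k b (extP k τ))]
      congr 1
      · congr 1
        funext i
        simp [wrd, extP_castSucc]
      · simp [wrd, extP_last, h]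
    rw [hlist, List.concat_eq_append, Hprod_append]
    simp
  · rw [toComp, if_neg h, immaculate_ofFn]
    rfl

def gbar (g : Fin k → ℕ) : Fin (k+1) → ℕ := Fin.snoc g 0

@[simp] lemma gbar_castSucc (g : Fin k → ℕ) (i : Fin k) : gbar k g i.castSucc = g i :=
  Fin.snoc_castSucc _ _ _

@[simp] lemma gbar_last (g : Fin k → ℕ) : gbar k g (Fin.last k) = 0 :=
  Fin.snoc_last _ _

def Mfun (g : Fin k → ℕ) (b : Fin (k+1) → ℕ) (σ : Equiv.Perm (Fin (k+1))) :
    Fin (k+1) → ℤ :=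
  fun i => (b i : ℤ) + ((σ i : ℕ) : ℤ) - ((gbar k g i : ℕ) : ℤ)

lemma Mfun_wrd (g : Fin k → ℕ) (b : Fin (k+1) → ℕ) (σ : Equiv.Perm (Fin (k+1))) (i : Fin (k+1)) :
    Mfun k g b σ i = wrd k b σ i + ((i : ℕ) : ℤ) - ((gbar k g i : ℕ) : ℤ) := by
  unfold Mfun wrd
  ring

lemma snoc_le_b {g : Fin k → ℕ} {s : ℤ} {b : Fin (k+1) → ℕ} (hb : b ∈ BSet k g s) :
    ∀ t : Fin (k+1), gbar k g t ≤ b t := by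
  intro t
  induction t using Fin.lastCases with
  | last => rw [gbar_last]; exact Nat.zero_le _
  | cast i =>
    rw [gbar_castSucc]
    exact ((mem_BSet k).1 hb).1 i

lemma sigma_le_M {g : Fin k → ℕ} {s : ℤ} {b : Fin (k+1) → ℕ} (hb : b ∈ BSet k g s)
    (σ : Equiv.Perm (Fin (k+1))) (t : Fin (k+1)) :
    ((σ t : ℕ) : ℤ) ≤ Mfun k g b σ t := by
  have := snoc_le_b k hb t
  unfold Mfun
  have h1 : ((gbar k g t : ℕ) : ℤ) ≤ (b t : ℤ) := by exact_mod_cast this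
  omega

lemma Mfun_nonneg {g : Fin k → ℕ} {s : ℤ} {b : Fin (k+1) → ℕ} (hb : b ∈ BSet k g s)
    (σ : Equiv.Perm (Fin (k+1))) (t : Fin (k+1)) : 0 ≤ Mfun k g b σ t :=
  le_trans (Int.ofNat_nonneg _) (sigma_le_M k hb σ t)

def Mb (g : Fin k → ℕ) (b : Fin (k+1) → ℕ) (σ : Equiv.Perm (Fin (k+1))) :
    Fin (k+1) → Fin (k+1) :=
  fun i => ⟨(min (Mfun k g b σ i) (k : ℤ)).toNat, by
    have h1 : min (Mfun k g b σ i) (k : ℤ) ≤ (k : ℤ) := min_le_right _ _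
    have := Int.toNat_le.2 h1
    omega⟩

lemma Mb_val {g : Fin k → ℕ} {s : ℤ} {b : Fin (k+1) → ℕ} (hb : b ∈ BSet k g s)
    (σ : Equiv.Perm (Fin (k+1))) (t : Fin (k+1)) :
    ((Mb k g b σ t : ℕ) : ℤ) = min (Mfun k g b σ t) (k : ℤ) := by
  show ((min (Mfun k g b σ t) (k : ℤ)).toNat : ℤ) = _
  rw [Int.toNat_of_nonneg]
  exact le_min (Mfun_nonneg k hb σ t) (Int.ofNat_nonneg _)

lemma sigma_le_Mb {g : Fin k → ℕ} {s : ℤ} {b : Fin (k+1) → ℕ} (hb : b ∈ BSet k g s)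
    (σ : Equiv.Perm (Fin (k+1))) (t : Fin (k+1)) :
    ((σ t : Fin (k+1)) : ℕ) ≤ ((Mb k g b σ t : Fin (k+1)) : ℕ) := by
  have h1 : ((σ t : ℕ) : ℤ) ≤ min (Mfun k g b σ t) (k : ℤ) := by
    refine le_min (sigma_le_M k hb σ t) ?_
    have := (σ t).isLt
    omega
  rw [← Mb_val k hb σ t] at h1
  exact_mod_cast h1

lemma Mb_le_M {g : Fin k → ℕ} {s : ℤ} {b : Fin (k+1) → ℕ} (hb : b ∈ BSet k g s)
    (σ : Equiv.Perm (Fin (k+1))) (t : Fin (k+1)) :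
    ((Mb k g b σ t : ℕ) : ℤ) ≤ Mfun k g b σ t := by
  rw [Mb_val k hb σ t]
  exact min_le_left _ _

lemma surv_of_inj {g : Fin k → ℕ} {s : ℤ} {b : Fin (k+1) → ℕ} {σ : Equiv.Perm (Fin (k+1))}
    (hb : b ∈ BSet k g s) (hnn : ∀ i, 0 ≤ wrd k b σ i)
    (hinj : Function.Injective (Mb k g b σ)) :
    σ (Fin.last k) = Fin.last k ∧ (∀ i : Fin k, b i.castSucc = g i) ∧ ((b (Fin.last k) : ℕ) : ℤ) = s := by
  have hbij : Function.Bijective (Mb k g b σ) := Finite.injective_iff_bijective.1 hinj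
  have hsum : ∑ t, ((σ t : Fin (k+1)) : ℕ) = ∑ t, ((Mb k g b σ t : Fin (k+1)) : ℕ) := by
    have h1 : ∑ t, ((Mb k g b σ t : Fin (k+1)) : ℕ)
        = ∑ t, ((Equiv.ofBijective _ hbij t : Fin (k+1)) : ℕ) := rfl
    rw [Equiv.sum_comp σ (fun x : Fin (k+1) => (x : ℕ)), h1,
      Equiv.sum_comp (Equiv.ofBijective _ hbij) (fun x : Fin (k+1) => (x : ℕ))]
  have heq : ∀ t, ((σ t : Fin (k+1)) : ℕ) = ((Mb k g b σ t : Fin (k+1)) : ℕ) := by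
    intro t
    exact (Finset.sum_eq_sum_iff_of_le (fun i _ => sigma_le_Mb k hb σ i)).1 hsum t (Finset.mem_univ t)
  have hMlast : ((Mb k g b σ (Fin.last k) : Fin (k+1)) : ℕ) = k := by
    have h1 : Mfun k g b σ (Fin.last k) ≥ (k : ℤ) := by
      rw [Mfun_wrd]
      have := hnn (Fin.last k)
      rw [gbar_last]
      simp only [Fin.val_last]
      push_cast
      omega
    have h2 := Mb_val k hb σ (Fin.last k)
    rw [min_eq_right h1] at h2
    exact_mod_cast h2
  have hσlast : σ (Fin.last k) = Fin.last k := by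
    apply Fin.ext
    rw [heq, hMlast]
    rfl
  have hcast : ∀ i : Fin k, b i.castSucc = g i := by
    intro i
    have hne : Mb k g b σ i.castSucc ≠ Mb k g b σ (Fin.last k) := by
      intro hcon
      have := hinj hcon
      exact absurd this (by simp [Fin.ext_iff]; omega)
    have hMne : ((Mb k g b σ i.castSucc : Fin (k+1)) : ℕ) ≠ k := by
      intro hcon
      apply hne
      apply Fin.ext
      rw [hcon, hMlast]
    have hMlt : Mfun k g b σ i.castSucc < (k : ℤ) := by
      by_contra hcon
      push_neg at hcon
      have h2 := Mb_val k hb σ i.castSucc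
      rw [min_eq_right hcon] at h2
      exact hMne (by exact_mod_cast h2)
    have h2 := Mb_val k hb σ i.castSucc
    rw [min_eq_left hMlt.le] at h2
    have h3 := heq i.castSucc
    have h4 : ((σ i.castSucc : Fin (k+1)) : ℤ) = Mfun k g b σ i.castSucc := by
      rw [← h2]
      exact_mod_cast congrArg (fun x : ℕ => (x : ℤ)) h3
    unfold Mfun at h4
    rw [gbar_castSucc] at h4
    have : (b i.castSucc : ℤ) = (g i : ℤ) := by omega
    exact_mod_cast this
  refine ⟨hσlast, hcast, ?_⟩
  have hsumb := ((mem_BSet k).1 hb).2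
  rw [Fin.sum_univ_castSucc (fun i => (b i : ℤ))] at hsumb
  have hgs : ∑ i : Fin k, (b i.castSucc : ℤ) = ∑ i : Fin k, (g i : ℤ) :=
    Finset.sum_congr rfl fun i _ => by rw [hcast i]
  linarith

def swapB (b : Fin (k+1) → ℕ) (σ : Equiv.Perm (Fin (k+1))) (i0 j0 : Fin (k+1)) :
    Fin (k+1) → ℕ :=
  fun t => ((b t : ℤ) + ((σ t : ℕ) : ℤ) - (((σ * Equiv.swap i0 j0) t : ℕ) : ℤ)).toNat

section SwapFacts
variable {g : Fin k → ℕ} {s : ℤ} {b : Fin (k+1) → ℕ} {σ : Equiv.Perm (Fin (k+1))}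
  {i0 j0 : Fin (k+1)}

lemma swap_sigma'_le (hb : b ∈ BSet k g s) (hne : i0 ≠ j0)
    (hMeq : Mb k g b σ i0 = Mb k g b σ j0) (t : Fin (k+1)) :
    (((σ * Equiv.swap i0 j0) t : ℕ) : ℤ) ≤ Mfun k g b σ t := by
  rcases eq_or_ne t i0 with rfl | hti
  · have h1 : (σ * Equiv.swap t j0) t = σ j0 := by
      rw [Equiv.Perm.mul_apply, Equiv.swap_apply_left]
    rw [h1]
    calc ((σ j0 : ℕ) : ℤ) ≤ ((Mb k g b σ j0 : ℕ) : ℤ) := by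
          exact_mod_cast sigma_le_Mb k hb σ j0
      _ = ((Mb k g b σ t : ℕ) : ℤ) := by rw [hMeq]
      _ ≤ Mfun k g b σ t := Mb_le_M k hb σ t
  · rcases eq_or_ne t j0 with rfl | htj
    · have h1 : (σ * Equiv.swap i0 t) t = σ i0 := by
        rw [Equiv.Perm.mul_apply, Equiv.swap_apply_right]
      rw [h1]
      calc ((σ i0 : ℕ) : ℤ) ≤ ((Mb k g b σ i0 : ℕ) : ℤ) := by
            exact_mod_cast sigma_le_Mb k hb σ i0
        _ = ((Mb k g b σ t : ℕ) : ℤ) := by rw [hMeq]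
        _ ≤ Mfun k g b σ t := Mb_le_M k hb σ t
    · have h1 : (σ * Equiv.swap i0 j0) t = σ t := by
        rw [Equiv.Perm.mul_apply, Equiv.swap_apply_of_ne_of_ne hti htj]
      rw [h1]
      exact sigma_le_M k hb σ t

lemma swapB_val (hb : b ∈ BSet k g s) (hne : i0 ≠ j0)
    (hMeq : Mb k g b σ i0 = Mb k g b σ j0) (t : Fin (k+1)) :
    ((swapB k b σ i0 j0 t : ℕ) : ℤ)
      = (b t : ℤ) + ((σ t : ℕ) : ℤ) - (((σ * Equiv.swap i0 j0) t : ℕ) : ℤ) := by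
  unfold swapB
  rw [Int.toNat_of_nonneg]
  have h1 := swap_sigma'_le k hb hne hMeq t
  have h2 : Mfun k g b σ t ≤ (b t : ℤ) + ((σ t : ℕ) : ℤ) := by
    unfold Mfun
    have : (0 : ℤ) ≤ ((gbar k g t : ℕ) : ℤ) := Int.ofNat_nonneg _
    omega
  omega

lemma swapB_mem (hb : b ∈ BSet k g s) (hne : i0 ≠ j0)
    (hMeq : Mb k g b σ i0 = Mb k g b σ j0) :
    swapB k b σ i0 j0 ∈ BSet k g s := by
  rw [mem_BSet]
  constructor
  · intro i
    have h1 := swapB_val k hb hne hMeq i.castSucc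
    have h2 := swap_sigma'_le k hb hne hMeq i.castSucc
    have h3 : Mfun k g b σ i.castSucc
        = (b i.castSucc : ℤ) + ((σ i.castSucc : ℕ) : ℤ) - (g i : ℤ) := by
      unfold Mfun
      rw [gbar_castSucc]
    have : (g i : ℤ) ≤ ((swapB k b σ i0 j0 i.castSucc : ℕ) : ℤ) := by omega
    exact_mod_cast this
  · have h1 : ∑ t, ((swapB k b σ i0 j0 t : ℕ) : ℤ)
        = ∑ t, ((b t : ℤ) + ((σ t : ℕ) : ℤ) - (((σ * Equiv.swap i0 j0) t : ℕ) : ℤ)) :=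
      Finset.sum_congr rfl fun t _ => swapB_val k hb hne hMeq t
    rw [Finset.sum_sub_distrib, Finset.sum_add_distrib] at h1
    have h2 : ∑ t, (((σ t : ℕ) : ℤ)) = ∑ t : Fin (k+1), ((t : ℕ) : ℤ) :=
      Equiv.sum_comp σ (fun x : Fin (k+1) => ((x : ℕ) : ℤ))
    have h3 : ∑ t, ((((σ * Equiv.swap i0 j0) t : ℕ) : ℤ)) = ∑ t : Fin (k+1), ((t : ℕ) : ℤ) :=
      Equiv.sum_comp (σ * Equiv.swap i0 j0) (fun x : Fin (k+1) => ((x : ℕ) : ℤ))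
    rw [h1, h2, h3, ((mem_BSet k).1 hb).2]
    ring

lemma swapB_wrd (hb : b ∈ BSet k g s) (hne : i0 ≠ j0)
    (hMeq : Mb k g b σ i0 = Mb k g b σ j0) :
    wrd k (swapB k b σ i0 j0) (σ * Equiv.swap i0 j0) = wrd k b σ := by
  funext t
  unfold wrd
  rw [swapB_val k hb hne hMeq t]
  ring

lemma swapB_Mb (hb : b ∈ BSet k g s) (hne : i0 ≠ j0)
    (hMeq : Mb k g b σ i0 = Mb k g b σ j0) :
    Mb k g (swapB k b σ i0 j0) (σ * Equiv.swap i0 j0) = Mb k g b σ := by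
  have hM : Mfun k g (swapB k b σ i0 j0) (σ * Equiv.swap i0 j0) = Mfun k g b σ := by
    funext t
    rw [Mfun_wrd, Mfun_wrd, swapB_wrd k hb hne hMeq]
  funext t
  apply Fin.ext
  show (min (Mfun k g (swapB k b σ i0 j0) (σ * Equiv.swap i0 j0) t) ((k:ℕ) : ℤ)).toNat
      = (min (Mfun k g b σ t) ((k:ℕ) : ℤ)).toNat
  rw [congrFun hM t]

lemma swapB_trm (hb : b ∈ BSet k g s) (hne : i0 ≠ j0)
    (hMeq : Mb k g b σ i0 = Mb k g b σ j0) :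
    trm k (swapB k b σ i0 j0) (σ * Equiv.swap i0 j0) = - trm k b σ := by
  unfold trm
  rw [swapB_wrd k hb hne hMeq, Equiv.Perm.sign_mul, Equiv.Perm.sign_swap hne]
  push_cast
  rw [mul_neg_one, neg_smul]

lemma swapB_swapB (hb : b ∈ BSet k g s) (hne : i0 ≠ j0)
    (hMeq : Mb k g b σ i0 = Mb k g b σ j0) :
    swapB k (swapB k b σ i0 j0) (σ * Equiv.swap i0 j0) i0 j0 = b ∧
      (σ * Equiv.swap i0 j0) * Equiv.swap i0 j0 = σ := by
  have hσ : (σ * Equiv.swap i0 j0) * Equiv.swap i0 j0 = σ := by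
    rw [mul_assoc, Equiv.swap_mul_self, mul_one]
  refine ⟨?_, hσ⟩
  have hb' := swapB_mem k hb hne hMeq
  have hMeq' : Mb k g (swapB k b σ i0 j0) (σ * Equiv.swap i0 j0) i0
      = Mb k g (swapB k b σ i0 j0) (σ * Equiv.swap i0 j0) j0 := by
    rw [swapB_Mb k hb hne hMeq, hMeq]
  funext t
  have h1 := swapB_val k hb' hne hMeq' t
  rw [hσ] at h1
  have h2 := swapB_val k hb hne hMeq t
  have : ((swapB k (swapB k b σ i0 j0) (σ * Equiv.swap i0 j0) i0 j0 t : ℕ) : ℤ) = (b t : ℤ) := by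
    rw [h1, h2]
    ring
  exact_mod_cast this
end SwapFacts

lemma pivot_nonempty {f : Fin (k+1) → Fin (k+1)} (h : ¬ Function.Injective f) :
    (Finset.univ.filter (fun i => ∃ j, i < j ∧ f j = f i)).Nonempty := by
  rw [Function.not_injective_iff] at h
  obtain ⟨a, c, hfac, hac⟩ := h
  rcases hac.lt_or_gt with hl | hl
  · exact ⟨a, Finset.mem_filter.2 ⟨Finset.mem_univ _, ⟨c, hl, hfac.symm⟩⟩⟩
  · exact ⟨c, Finset.mem_filter.2 ⟨Finset.mem_univ _, ⟨a, hl, hfac⟩⟩⟩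

noncomputable def pivotI (f : Fin (k+1) → Fin (k+1)) (h : ¬ Function.Injective f) : Fin (k+1) :=
  (Finset.univ.filter (fun i => ∃ j, i < j ∧ f j = f i)).min' (pivot_nonempty k h)

lemma pivotJ_nonempty (f : Fin (k+1) → Fin (k+1)) (h : ¬ Function.Injective f) :
    (Finset.univ.filter (fun j => pivotI k f h < j ∧ f j = f (pivotI k f h))).Nonempty := by
  have hmem := Finset.min'_mem _ (pivot_nonempty k h)
  rw [Finset.mem_filter] at hmem
  obtain ⟨j, hj1, hj2⟩ := hmem.2
  exact ⟨j, Finset.mem_filter.2 ⟨Finset.mem_univ _, hj1, hj2⟩⟩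

noncomputable def pivotJ (f : Fin (k+1) → Fin (k+1)) (h : ¬ Function.Injective f) : Fin (k+1) :=
  (Finset.univ.filter (fun j => pivotI k f h < j ∧ f j = f (pivotI k f h))).min'
    (pivotJ_nonempty k f h)

lemma pivot_ne (f : Fin (k+1) → Fin (k+1)) (h : ¬ Function.Injective f) :
    pivotI k f h ≠ pivotJ k f h := by
  have hmem := Finset.min'_mem _ (pivotJ_nonempty k f h)
  rw [Finset.mem_filter] at hmem
  exact ne_of_lt hmem.2.1

lemma pivot_eq (f : Fin (k+1) → Fin (k+1)) (h : ¬ Function.Injective f) :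
    f (pivotI k f h) = f (pivotJ k f h) := by
  have hmem := Finset.min'_mem _ (pivotJ_nonempty k f h)
  rw [Finset.mem_filter] at hmem
  exact hmem.2.2.symm

noncomputable def invol (g : Fin k → ℕ)
    (p : (Fin (k+1) → ℕ) × Equiv.Perm (Fin (k+1))) :
    (Fin (k+1) → ℕ) × Equiv.Perm (Fin (k+1)) :=
  if h : ¬ Function.Injective (Mb k g p.1 p.2) then
    (swapB k p.1 p.2 (pivotI k (Mb k g p.1 p.2) h) (pivotJ k (Mb k g p.1 p.2) h),
      p.2 * Equiv.swap (pivotI k (Mb k g p.1 p.2) h) (pivotJ k (Mb k g p.1 p.2) h))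
  else p

def bstar (g : Fin k → ℕ) (m : ℕ) : Fin (k+1) → ℕ := Fin.snoc g m

@[simp] lemma bstar_castSucc (g : Fin k → ℕ) (m : ℕ) (i : Fin k) :
    bstar k g m i.castSucc = g i := Fin.snoc_castSucc _ _ _

@[simp] lemma bstar_last (g : Fin k → ℕ) (m : ℕ) : bstar k g m (Fin.last k) = m :=
  Fin.snoc_last _ _

lemma bstar_mem (g : Fin k → ℕ) (m : ℕ) : bstar k g m ∈ BSet k g (m : ℤ) := by
  rw [mem_BSet]
  refine ⟨fun i => by simp, ?_⟩
  rw [Fin.sum_univ_castSucc (fun i => (bstar k g m i : ℤ))]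
  simp

lemma Mb_inj_surv (g : Fin k → ℕ) (m : ℕ) (σ : Equiv.Perm (Fin (k+1)))
    (hσ : σ (Fin.last k) = Fin.last k) :
    Function.Injective (Mb k g (bstar k g m) σ) := by
  have hval : ∀ t, ((Mb k g (bstar k g m) σ t : Fin (k+1)) : ℕ) = ((σ t : Fin (k+1)) : ℕ) := by
    intro t
    induction t using Fin.lastCases with
    | last =>
      have hM : Mfun k g (bstar k g m) σ (Fin.last k) = (m : ℤ) + (k : ℤ) := by
        unfold Mfun
        rw [hσ]
        simp
      show (min (Mfun k g (bstar k g m) σ (Fin.last k)) ((k:ℕ) : ℤ)).toNat = _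
      rw [hM, hσ, min_eq_right (by omega)]
      simp
    | cast i =>
      have hM : Mfun k g (bstar k g m) σ i.castSucc = ((σ i.castSucc : ℕ) : ℤ) := by
        unfold Mfun
        simp
      show (min (Mfun k g (bstar k g m) σ i.castSucc) ((k:ℕ) : ℤ)).toNat = _
      rw [hM]
      have hlt : ((σ i.castSucc : ℕ) : ℤ) ≤ (k : ℤ) := by
        have := (σ i.castSucc).isLt
        omega
      rw [min_eq_left hlt]
      simp
  intro a c h
  have : ((σ a : Fin (k+1)) : ℕ) = ((σ c : Fin (k+1)) : ℕ) := by
    rw [← hval a, ← hval c, h]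
  exact σ.injective (Fin.ext this)

lemma surv_full {g : Fin k → ℕ} {m : ℕ} {b : Fin (k+1) → ℕ} {σ : Equiv.Perm (Fin (k+1))}
    (hb : b ∈ BSet k g (m : ℤ)) (hnn : ∀ i, 0 ≤ wrd k b σ i)
    (hinj : Function.Injective (Mb k g b σ)) :
    b = bstar k g m ∧ σ (Fin.last k) = Fin.last k := by
  obtain ⟨h1, h2, h3⟩ := surv_of_inj k hb hnn hinj
  refine ⟨?_, h1⟩
  funext t
  induction t using Fin.lastCases with
  | last =>
    rw [bstar_last]
    exact_mod_cast h3
  | cast i =>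
    rw [bstar_castSucc]
    exact h2 i

lemma invol_pos (g : Fin k → ℕ) (p : (Fin (k+1) → ℕ) × Equiv.Perm (Fin (k+1)))
    (h : ¬ Function.Injective (Mb k g p.1 p.2)) :
    invol k g p = (swapB k p.1 p.2 (pivotI k (Mb k g p.1 p.2) h) (pivotJ k (Mb k g p.1 p.2) h),
      p.2 * Equiv.swap (pivotI k (Mb k g p.1 p.2) h) (pivotJ k (Mb k g p.1 p.2) h)) :=
  dif_pos h

lemma invol_neg (g : Fin k → ℕ) (p : (Fin (k+1) → ℕ) × Equiv.Perm (Fin (k+1)))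
    (h : Function.Injective (Mb k g p.1 p.2)) : invol k g p = p :=
  dif_neg (not_not.2 h)

lemma invol_pos' (g : Fin k → ℕ) (b : Fin (k+1) → ℕ) (σ : Equiv.Perm (Fin (k+1)))
    (h : ¬ Function.Injective (Mb k g b σ)) :
    invol k g (b, σ) = (swapB k b σ (pivotI k (Mb k g b σ) h) (pivotJ k (Mb k g b σ) h),
      σ * Equiv.swap (pivotI k (Mb k g b σ) h) (pivotJ k (Mb k g b σ) h)) :=
  dif_pos h

lemma invol_neg' (g : Fin k → ℕ) (b : Fin (k+1) → ℕ) (σ : Equiv.Perm (Fin (k+1)))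
    (h : Function.Injective (Mb k g b σ)) : invol k g (b, σ) = (b, σ) :=
  dif_neg (not_not.2 h)

lemma trm_nonneg_of_ne {b : Fin (k+1) → ℕ} {σ : Equiv.Perm (Fin (k+1))}
    (htrm : trm k b σ ≠ 0) : ∀ i, 0 ≤ wrd k b σ i := by
  by_contra hcon
  push_neg at hcon
  obtain ⟨i, hi⟩ := hcon
  exact htrm (by
    unfold trm
    rw [Hprod_eq_zero ⟨wrd k b σ i, by rw [List.mem_ofFn]; exact ⟨i, rfl⟩, hi⟩, smul_zero])

lemma pivotI_congr {f f' : Fin (k+1) → Fin (k+1)} (hff : f = f')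
    (h : ¬ Function.Injective f) (h' : ¬ Function.Injective f') :
    pivotI k f h = pivotI k f' h' := by
  subst hff
  rfl

lemma pivotJ_congr {f f' : Fin (k+1) → Fin (k+1)} (hff : f = f')
    (h : ¬ Function.Injective f) (h' : ¬ Function.Injective f') :
    pivotJ k f h = pivotJ k f' h' := by
  subst hff
  rfl

lemma invol_invol {g : Fin k → ℕ} {s : ℤ} (b : Fin (k+1) → ℕ) (σ : Equiv.Perm (Fin (k+1)))
    (hb : b ∈ BSet k g s) :
    invol k g (invol k g (b, σ)) = (b, σ) := by
  by_cases h : Function.Injective (Mb k g b σ)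
  · rw [invol_neg' k g b σ h, invol_neg' k g b σ h]
  · have hne := pivot_ne k (Mb k g b σ) h
    have hMeq := pivot_eq k (Mb k g b σ) h
    set i0 := pivotI k (Mb k g b σ) h with hi0
    set j0 := pivotJ k (Mb k g b σ) h with hj0
    have hMB := swapB_Mb k hb hne hMeq
    have h' : ¬ Function.Injective
        (Mb k g (swapB k b σ i0 j0) (σ * Equiv.swap i0 j0)) := by
      rw [hMB]
      exact h
    rw [invol_pos' k g b σ h, invol_pos' k g (swapB k b σ i0 j0) (σ * Equiv.swap i0 j0) h']
    have e1 : pivotI k (Mb k g (swapB k b σ i0 j0) (σ * Equiv.swap i0 j0)) h' = i0 :=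
      pivotI_congr k hMB h' h
    have e2 : pivotJ k (Mb k g (swapB k b σ i0 j0) (σ * Equiv.swap i0 j0)) h' = j0 :=
      pivotJ_congr k hMB h' h
    rw [e1, e2]
    obtain ⟨hB, hS⟩ := swapB_swapB k hb hne hMeq
    rw [Prod.ext_iff]
    exact ⟨hB, hS⟩

lemma sum_nonsurv (g : Fin k → ℕ) (m : ℕ) :
    ∑ p ∈ ((BSet k g (m:ℤ)) ×ˢ (Finset.univ : Finset (Equiv.Perm (Fin (k+1))))).filter
        (fun p => ¬(p.1 = bstar k g m ∧ p.2 (Fin.last k) = Fin.last k)),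
      trm k p.1 p.2 = 0 := by
  have hmem : ∀ p : (Fin (k+1) → ℕ) × Equiv.Perm (Fin (k+1)), p ∈ ((BSet k g (m:ℤ)) ×ˢ (Finset.univ : Finset (Equiv.Perm (Fin (k+1))))).filter
        (fun p => ¬(p.1 = bstar k g m ∧ p.2 (Fin.last k) = Fin.last k)) →
      p.1 ∈ BSet k g (m:ℤ) ∧ ¬(p.1 = bstar k g m ∧ p.2 (Fin.last k) = Fin.last k) := by
    intro p hp
    rw [Finset.mem_filter, Finset.mem_product] at hp
    exact ⟨hp.1.1, hp.2⟩
  have hzero : ∀ p : (Fin (k+1) → ℕ) × Equiv.Perm (Fin (k+1)), p.1 ∈ BSet k g (m:ℤ) →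
      ¬(p.1 = bstar k g m ∧ p.2 (Fin.last k) = Fin.last k) →
      Function.Injective (Mb k g p.1 p.2) → trm k p.1 p.2 = 0 := by
    intro p hb hns hinj
    by_contra hf
    exact hns (surv_full k hb (trm_nonneg_of_ne k hf) hinj)
  apply Finset.sum_involution (fun p _ => invol k g p)
  · intro p hp
    obtain ⟨hb, hns⟩ := hmem p hp
    by_cases h : Function.Injective (Mb k g p.1 p.2)
    · rw [invol_neg k g p h]
      have := hzero p hb hns h
      rw [this, add_zero]
    · rw [invol_pos k g p h]
      have := swapB_trm k hb (pivot_ne k _ h) (pivot_eq k _ h)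
      show trm k p.1 p.2 + trm k (swapB k p.1 p.2 _ _) (p.2 * Equiv.swap _ _) = 0
      rw [this, add_neg_cancel]
  · intro p hp hf
    obtain ⟨hb, hns⟩ := hmem p hp
    by_cases h : Function.Injective (Mb k g p.1 p.2)
    · exact absurd (hzero p hb hns h) hf
    · rw [invol_pos k g p h]
      intro hcon
      have h2 := congrArg Prod.snd hcon
      simp only at h2
      have h3 : Equiv.swap (pivotI k (Mb k g p.1 p.2) h) (pivotJ k (Mb k g p.1 p.2) h) = 1 := by
        exact mul_left_cancel (a := p.2) (by rw [mul_one]; exact h2)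
      have h4 := congrArg (fun e : Equiv.Perm (Fin (k+1)) => e (pivotI k (Mb k g p.1 p.2) h)) h3
      simp only [Equiv.swap_apply_left, Equiv.Perm.coe_one, id_eq] at h4
      exact pivot_ne k _ h h4.symm
  · intro p hp
    obtain ⟨hb, hns⟩ := hmem p hp
    by_cases h : Function.Injective (Mb k g p.1 p.2)
    · rw [invol_neg k g p h]
      exact hp
    · rw [invol_pos k g p h]
      rw [Finset.mem_filter, Finset.mem_product]
      refine ⟨⟨swapB_mem k hb (pivot_ne k _ h) (pivot_eq k _ h), Finset.mem_univ _⟩, ?_⟩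
      rintro ⟨hs1, hs2⟩
      apply h
      have hMB := swapB_Mb k hb (pivot_ne k _ h) (pivot_eq k _ h)
      rw [← hMB]
      have : Function.Injective (Mb k g
          (swapB k p.1 p.2 (pivotI k (Mb k g p.1 p.2) h) (pivotJ k (Mb k g p.1 p.2) h))
          (p.2 * Equiv.swap (pivotI k (Mb k g p.1 p.2) h) (pivotJ k (Mb k g p.1 p.2) h))) := by
      -- use hs1 : swapB ... = bstar
        rw [show (swapB k p.1 p.2 (pivotI k (Mb k g p.1 p.2) h) (pivotJ k (Mb k g p.1 p.2) h))
            = bstar k g m from hs1]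
        exact Mb_inj_surv k g m _ hs2
      exact this
  · intro p hp
    obtain ⟨hb, hns⟩ := hmem p hp
    have := invol_invol k p.1 p.2 hb
    simpa using this

lemma sum_surv (g : Fin k → ℕ) (m : ℕ) :
    ∑ p ∈ ((BSet k g (m:ℤ)) ×ˢ (Finset.univ : Finset (Equiv.Perm (Fin (k+1))))).filter
        (fun p => p.1 = bstar k g m ∧ p.2 (Fin.last k) = Fin.last k),
      trm k p.1 p.2
    = ∑ σ ∈ Finset.univ.filter
        (fun σ : Equiv.Perm (Fin (k+1)) => σ (Fin.last k) = Fin.last k),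
      trm k (bstar k g m) σ := by
  refine Finset.sum_bij' (fun p _ => p.2) (fun σ _ => (bstar k g m, σ)) ?_ ?_ ?_ ?_ ?_
  · intro p hp
    rw [Finset.mem_filter] at hp
    exact Finset.mem_filter.2 ⟨Finset.mem_univ _, hp.2.2⟩
  · intro σ hσ
    rw [Finset.mem_filter] at hσ
    exact Finset.mem_filter.2 ⟨Finset.mem_product.2 ⟨bstar_mem k g m, Finset.mem_univ _⟩,
      rfl, hσ.2⟩
  · intro p hp
    rw [Finset.mem_filter] at hp
    exact Prod.ext_iff.2 ⟨hp.2.1.symm, rfl⟩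
  · intro σ hσ
    rfl
  · intro p hp
    rw [Finset.mem_filter] at hp
    rw [hp.2.1]

theorem pieri (g : Fin k → ℕ) (hg : ∀ i, 0 < g i) (s : ℤ) :
    immaculate (List.ofFn g) * H s = ∑ b ∈ BSet k g s, immaculate (toComp k b) := by
  by_cases hs : s < 0
  · rw [H_neg hs, mul_zero]
    have hempty : ∀ b, b ∉ BSet k g s := by
      intro b hbmem
      obtain ⟨h1, h2⟩ := (mem_BSet k).1 hbmem
      have h3 : ∑ i, (b i : ℤ) = ∑ i : Fin k, (b i.castSucc : ℤ) + (b (Fin.last k) : ℤ) :=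
        Fin.sum_univ_castSucc (fun i => (b i : ℤ))
      have h4 : ∑ i : Fin k, (g i : ℤ) ≤ ∑ i : Fin k, (b i.castSucc : ℤ) :=
        Finset.sum_le_sum fun i _ => by exact_mod_cast h1 i
      have h5 : (0 : ℤ) ≤ (b (Fin.last k) : ℤ) := Int.ofNat_nonneg _
      linarith [h2]
    rw [Finset.eq_empty_of_forall_notMem hempty, Finset.sum_empty]
  · push_neg at hs
    obtain ⟨m, rfl⟩ := Int.eq_ofNat_of_zero_le hs
    have hpos : ∀ b ∈ BSet k g (m : ℤ), ∀ i : Fin k, 0 < b i.castSucc :=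
      fun b hb i => lt_of_lt_of_le (hg i) (((mem_BSet k).1 hb).1 i)
    have step1 : ∑ b ∈ BSet k g (m:ℤ), immaculate (toComp k b)
        = ∑ p ∈ (BSet k g (m:ℤ)) ×ˢ (Finset.univ : Finset (Equiv.Perm (Fin (k+1)))),
            trm k p.1 p.2 := by
      rw [Finset.sum_product']
      refine Finset.sum_congr rfl fun b hb => ?_
      exact immaculate_toComp k b (hpos b hb)
    have step2 : ∑ p ∈ (BSet k g (m:ℤ)) ×ˢ (Finset.univ : Finset (Equiv.Perm (Fin (k+1)))),
            trm k p.1 p.2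
        = ∑ σ ∈ Finset.univ.filter
            (fun σ : Equiv.Perm (Fin (k+1)) => σ (Fin.last k) = Fin.last k),
          trm k (bstar k g m) σ := by
      rw [← Finset.sum_filter_add_sum_filter_not
        ((BSet k g (m:ℤ)) ×ˢ (Finset.univ : Finset (Equiv.Perm (Fin (k+1)))))
        (fun p => p.1 = bstar k g m ∧ p.2 (Fin.last k) = Fin.last k) (fun p => trm k p.1 p.2),
        sum_nonsurv k g m, add_zero, sum_surv k g m]
    have step3 : ∑ σ ∈ Finset.univ.filter
          (fun σ : Equiv.Perm (Fin (k+1)) => σ (Fin.last k) = Fin.last k),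
        trm k (bstar k g m) σ = ∑ τ : Equiv.Perm (Fin k), trm k (bstar k g m) (extP k τ) :=
      sum_fix_last k _
    have step4 : ∀ τ : Equiv.Perm (Fin k), trm k (bstar k g m) (extP k τ)
        = ((Equiv.Perm.sign τ : ℤ)) •
            (Hprod (List.ofFn fun i : Fin k => ((g i : ℤ) + ((τ i : ℕ) : ℤ) - ((i : ℕ) : ℤ)))
              * H (m : ℤ)) := by
      intro τ
      unfold trm
      rw [sign_extP]
      congr 1
      have hlist : List.ofFn (wrd k (bstar k g m) (extP k τ))
          = (List.ofFn fun i : Fin k =>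
              ((g i : ℤ) + ((τ i : ℕ) : ℤ) - ((i : ℕ) : ℤ))).concat ((m : ℕ) : ℤ) := by
        rw [List.ofFn_succ' (wrd k (bstar k g m) (extP k τ))]
        congr 1
        · congr 1
          funext i
          simp [wrd, extP_castSucc]
        · simp [wrd, extP_last]
      rw [hlist, List.concat_eq_append, Hprod_append, Hprod_cons, Hprod_nil, mul_one]
    rw [step1, step2, step3, Finset.sum_congr rfl (fun τ _ => step4 τ), immaculate_ofFn,
      Finset.sum_mul]
    refine Finset.sum_congr rfl fun τ _ => ?_
    rw [smul_mul_assoc]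

lemma toComp_shift (b : Fin (k+1) → ℕ) (v : List ℕ) (hv : v.length ≤ k) :
    toComp k (fun t => b t + v.getD (t : ℕ) 0) = padAdd (toComp k b) v := by
  have hlast : v.getD k 0 = 0 := List.getD_eq_default _ _ hv
  simp only [toComp, Fin.val_last, hlast, Nat.add_zero]
  by_cases h : b (Fin.last k) = 0
  · rw [if_pos h, if_pos h, padAdd_ofFn]
    simp only [Fin.coe_castSucc]
  · rw [if_neg h, if_neg h, padAdd_ofFn]

lemma BSet_shift_sum {M : Type*} [AddCommMonoid M] (g : Fin k → ℕ) (v : List ℕ)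
    (hv : v.length ≤ k) (s : ℤ) (F : List ℕ → M) :
    ∑ b ∈ BSet k (fun i => g i + v.getD (i : ℕ) 0) s, F (toComp k b)
      = ∑ b ∈ BSet k g s, F (padAdd (toComp k b) v) := by
  have hlast : v.getD k 0 = 0 := List.getD_eq_default _ _ hv
  have hsum : (∑ i : Fin (k+1), (v.getD (i:ℕ) 0 : ℤ)) = ∑ i : Fin k, (v.getD (i:ℕ) 0 : ℤ) := by
    rw [Fin.sum_univ_castSucc]
    have h0 : ((v.getD ((Fin.last k : Fin (k+1)) : ℕ) 0 : ℕ) : ℤ) = 0 := by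
      rw [Fin.val_last, hlast]
      norm_num
    rw [h0, add_zero]
    simp only [Fin.coe_castSucc]
  have hgsum : ∑ i : Fin k, ((g i + v.getD (i:ℕ) 0 : ℕ) : ℤ)
      = (∑ i, (g i : ℤ)) + ∑ i : Fin k, (v.getD (i:ℕ) 0 : ℤ) := by
    push_cast
    rw [Finset.sum_add_distrib]
  refine (Finset.sum_nbij' (fun b => fun t : Fin (k+1) => b t + v.getD (t:ℕ) 0)
    (fun b => fun t : Fin (k+1) => b t - v.getD (t:ℕ) 0) ?_ ?_ ?_ ?_ ?_).symm
  · intro b hb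
    rw [mem_BSet] at hb ⊢
    obtain ⟨hb1, hb2⟩ := hb
    constructor
    · intro i
      have h1 := hb1 i
      simp only [Fin.coe_castSucc]
      omega
    · have h3 : ∑ i : Fin (k+1), ((b i + v.getD (i:ℕ) 0 : ℕ) : ℤ)
          = (∑ i, (b i : ℤ)) + ∑ i : Fin (k+1), (v.getD (i:ℕ) 0 : ℤ) := by
        push_cast
        rw [Finset.sum_add_distrib]
      rw [h3, hsum, hb2, hgsum]
      ring
  · intro b hb
    rw [mem_BSet] at hb ⊢
    obtain ⟨hb1, hb2⟩ := hb
    have hge : ∀ t : Fin (k+1), v.getD (t:ℕ) 0 ≤ b t := by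
      intro t
      induction t using Fin.lastCases with
      | last =>
        rw [Fin.val_last, hlast]
        exact Nat.zero_le _
      | cast j =>
        have h1 := hb1 j
        simp only [Fin.coe_castSucc] at h1 ⊢
        omega
    constructor
    · intro i
      have h1 := hb1 i
      have h2 := hge i.castSucc
      simp only [Fin.coe_castSucc] at h1 h2 ⊢
      omega
    · have h3 : ∑ i : Fin (k+1), ((b i - v.getD (i:ℕ) 0 : ℕ) : ℤ)
          = (∑ i, (b i : ℤ)) - ∑ i : Fin (k+1), (v.getD (i:ℕ) 0 : ℤ) := by
        rw [← Finset.sum_sub_distrib]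
        refine Finset.sum_congr rfl fun t _ => ?_
        have := hge t
        omega
      rw [h3, hsum, hb2, hgsum]
      ring
  · intro b _
    funext t
    simp
  · intro b hb
    rw [mem_BSet] at hb
    obtain ⟨hb1, _⟩ := hb
    have hge : ∀ t : Fin (k+1), v.getD (t:ℕ) 0 ≤ b t := by
      intro t
      induction t using Fin.lastCases with
      | last =>
        rw [Fin.val_last, hlast]
        exact Nat.zero_le _
      | cast j =>
        have h1 := hb1 j
        simp only [Fin.coe_castSucc] at h1 ⊢
        omega
    funext t
    show b t - v.getD (t:ℕ) 0 + v.getD (t:ℕ) 0 = b t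
    have := hge t
    omega
  · intro b _
    rw [toComp_shift k b v hv]
end Pieri

lemma lemmaM : ∀ (L : List ℤ) (γ : List ℕ), IsComposition γ →
    ∃ d : List ℕ →₀ ℚ,
      (∀ δ ∈ d.support, IsComposition δ ∧ γ.length ≤ δ.length) ∧
      immaculate γ * Hprod L = Finsupp.linearCombination ℚ immaculate d ∧
      (∀ v : List ℕ, v.length ≤ γ.length →
        immaculate (padAdd γ v) * Hprod L
          = Finsupp.linearCombination ℚ (fun δ => immaculate (padAdd δ v)) d) := by
  intro L
  induction L with
  | nil =>
    intro γ hγ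
    refine ⟨Finsupp.single γ 1, ?_, ?_, ?_⟩
    · intro δ hδ
      rw [Finsupp.support_single_ne_zero _ one_ne_zero] at hδ
      rcases Finset.mem_singleton.1 hδ with rfl
      exact ⟨hγ, le_refl _⟩
    · rw [Hprod_nil, mul_one, Finsupp.linearCombination_single, one_smul]
    · intro v hv
      rw [Hprod_nil, mul_one, Finsupp.linearCombination_single, one_smul]
  | cons s L ih =>
    intro γ hγ
    have hg : ∀ i : Fin γ.length, 0 < γ.get i := fun i => hγ _ (List.get_mem γ i)
    have hp := pieri γ.length γ.get hg s
    rw [List.ofFn_get] at hp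
    have hIH : ∀ b ∈ BSet γ.length γ.get s, IsComposition (toComp γ.length b) :=
      fun b hb => toComp_isComposition _ hg hb
    choose D hD1 hD2 hD3 using fun (b : (BSet γ.length γ.get s : Finset _)) =>
      ih (toComp γ.length b.1) (hIH b.1 b.2)
    refine ⟨∑ b ∈ (BSet γ.length γ.get s).attach, D b, ?_, ?_, ?_⟩
    · intro δ hδ
      obtain ⟨b, _, hmem⟩ := Finset.mem_biUnion.1 (Finsupp.support_finset_sum hδ)
      obtain ⟨hcomp, hlen⟩ := hD1 b δ hmem
      exact ⟨hcomp, le_trans (toComp_length _ _) hlen⟩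
    · rw [Hprod_cons, ← mul_assoc, hp, Finset.sum_mul, map_sum, ← Finset.sum_attach]
      exact Finset.sum_congr rfl fun b _ => hD2 b
    · intro v hv
      have hp' := pieri γ.length (fun i => γ.get i + v.getD (i:ℕ) 0)
        (fun i => lt_of_lt_of_le (hg i) (Nat.le_add_right _ _)) s
      have hpad : padAdd γ v = List.ofFn (fun i : Fin γ.length => γ.get i + v.getD (i:ℕ) 0) := rfl
      rw [Hprod_cons, ← mul_assoc, hpad, hp', Finset.sum_mul,
        BSet_shift_sum γ.length γ.get v hv s (fun δ => immaculate δ * Hprod L)]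
      rw [map_sum, ← Finset.sum_attach]
      exact Finset.sum_congr rfl fun b _ => hD3 b v
        (le_trans hv (toComp_length _ _))

lemma padAdd_nil (δ : List ℕ) : padAdd δ [] = δ := by
  have h : (fun i : Fin δ.length => δ.get i + List.getD [] (i:ℕ) 0) = δ.get := by
    funext i
    simp
  rw [padAdd, h, List.ofFn_get]

theorem main (α β γ v : List ℕ)
    (hα : IsComposition α) (hβ : IsComposition β) (hγ : IsComposition γ)
    (hv : v.length ≤ α.length)
    (c c' : List ℕ →₀ ℚ)
    (hc : IsExpansion (immaculate α * immaculate β) c)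
    (hc' : IsExpansion (immaculate (padAdd α v) * immaculate β) c') :
    c γ = c' (padAdd γ v) := by
  classical
  choose D hD1 hD2 hD3 using fun τ : Equiv.Perm (Fin β.length) => lemmaM (wd β τ) α hα
  set C : List ℕ →₀ ℚ := ∑ τ : Equiv.Perm (Fin β.length), ((Equiv.Perm.sign τ : ℤ) : ℚ) • D τ
    with hCdef
  have hCsupp : ∀ δ ∈ C.support, IsComposition δ := by
    intro δ hδ
    rw [hCdef] at hδ
    obtain ⟨τ, _, hmem⟩ := Finset.mem_biUnion.1 (Finsupp.support_finset_sum hδ)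
    exact (hD1 τ δ (Finsupp.support_smul hmem)).1
  have key : ∀ (vv : List ℕ), vv.length ≤ α.length →
      immaculate (padAdd α vv) * immaculate β
        = Finsupp.linearCombination ℚ (fun δ => immaculate (padAdd δ vv)) C := by
    intro vv hvv
    rw [immaculate_def' β, Finset.mul_sum, hCdef, map_sum]
    refine Finset.sum_congr rfl fun τ _ => ?_
    rw [mul_smul_comm, hD3 τ vv hvv, map_smul, Int.cast_smul_eq_zsmul]
  have hCexp : IsExpansion (immaculate α * immaculate β) C := by
    rw [isExpansion_iff]
    refine ⟨hCsupp, ?_⟩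
    have h0 := key [] (by simp)
    simp only [padAdd_nil] at h0
    exact h0
  have hC'exp : IsExpansion (immaculate (padAdd α v) * immaculate β)
      (C.mapDomain (fun δ => padAdd δ v)) := by
    rw [isExpansion_iff]
    constructor
    · intro δ hδ
      obtain ⟨δ0, hδ0, rfl⟩ := Finset.mem_image.1 (Finsupp.mapDomain_support hδ)
      exact padAdd_isComposition (hCsupp δ0 hδ0) v
    · rw [Finsupp.linearCombination_mapDomain]
      exact key v hv
  rw [expansions_eq hc hCexp, expansions_eq hc' hC'exp,
    Finsupp.mapDomain_apply (padAdd_injective v)]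
end TI


/-- translation invariance: for compositions `α, β, γ` and a nonnegative
integer vector `v` with `ℓ(v) ≤ ℓ(α)`, the structure constants of the immaculate
basis satisfy `C_{α,β}^γ = C_{α+v,β}^{γ+v}`. -/
theorem translation_invariance (α β γ v : List ℕ)
    (hα : IsComposition α) (hβ : IsComposition β) (hγ : IsComposition γ)
    (hv : v.length ≤ α.length)
    (c c' : List ℕ →₀ ℚ)
    (hc : IsExpansion (immaculate α * immaculate β) c)
    (hc' : IsExpansion (immaculate (padAdd α v) * immaculate β) c') :
    c γ = c' (padAdd γ v) :=
  TI.main α β γ v hα hβ hγ hv c c' hc hc'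
end
end
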